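/- arXiv:1712.07902 — 6 statements merged into one kernel-verified Lean document; each statement's English description precedes it below -/
import Mathlib

section
/- (Remez inequality) Let p be a real polynomial of degree at most d, let I be a closed bounded interval of the real line, and let E ⊆ I be a Lebesgue measurable set of positive measure |E|. Then max_{x ∈ I} |p(x)| ≤ (4·|I| / |E|)^d · sup_{x ∈ E} |p(x)|, where |I| denotes the length of I. -/
/-!
Write `m = |E|`. The function `F t = |E ∩ (-∞, t]|` is nondecreasing and `1`-Lipschitz, so
every level `τ ∈ [0, m]` is attained as `F y = τ` at some `y ∈ closure E`, and points attaining
levels `τ i`, `τ j` are at distance at least `|τ i - τ j|`. Taking the levels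
`τ i = m (1 - cos (i π / d)) / 2` transported from the extremal points of the Chebyshev polynomial
`T_d`, Lagrange interpolation of `p` at these points gives, for `x ∈ I`,
`|p x| ≤ sup_E |p| · (2 |I| / m) ^ d · ∑ i, ∏ j ≠ i, |cos (i π / d) - cos (j π / d)|⁻¹`,
and the last sum is the leading coefficient `2 ^ (d - 1)` of `T_d`.
-/

open MeasureTheory Polynomial Finset

-- Junk (`ENNReal.toReal ∞ = 0`) unless `volume (E ∩ Set.Iic t) < ∞`.
noncomputable def cumulativeVolume (E : Set ℝ) (t : ℝ) : ℝ :=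
  (volume (E ∩ Set.Iic t)).toReal

section cumulativeVolume

variable {E : Set ℝ}

theorem cumulativeVolume_add_volume_Ioc (hE : volume E ≠ ⊤) {s t : ℝ} (hst : s ≤ t) :
    cumulativeVolume E s + (volume (E ∩ Set.Ioc s t)).toReal = cumulativeVolume E t := by
  have hsplit := measure_inter_add_sdiff (μ := volume) (E ∩ Set.Iic t) (measurableSet_Iic (a := s))
  rw [Set.inter_assoc, Set.Iic_inter_Iic, min_eq_right hst, Set.inter_sdiff_assoc,
    Set.Iic_sdiff_Iic] at hsplit
  rw [cumulativeVolume, cumulativeVolume, ← hsplit, ENNReal.toReal_add]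
  · exact measure_ne_top_of_subset Set.inter_subset_left hE
  · exact measure_ne_top_of_subset Set.inter_subset_left hE

theorem cumulativeVolume_le_add (hE : volume E ≠ ⊤) {s t : ℝ} (hst : s ≤ t) :
    cumulativeVolume E t ≤ cumulativeVolume E s + (t - s) := by
  rw [← cumulativeVolume_add_volume_Ioc hE hst]
  gcongr
  calc (volume (E ∩ Set.Ioc s t)).toReal ≤ (volume (Set.Ioc s t)).toReal :=
        ENNReal.toReal_mono measure_Ioc_lt_top.ne (measure_mono Set.inter_subset_right)
    _ = t - s := by rw [Real.volume_Ioc, ENNReal.toReal_ofReal (sub_nonneg.2 hst)]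

theorem monotone_cumulativeVolume (hE : volume E ≠ ⊤) : Monotone (cumulativeVolume E) :=
  fun _ _ hst => (cumulativeVolume_add_volume_Ioc hE hst).symm ▸
    le_add_of_nonneg_right ENNReal.toReal_nonneg

theorem lipschitzWith_one_cumulativeVolume (hE : volume E ≠ ⊤) :
    LipschitzWith 1 (cumulativeVolume E) := by
  refine LipschitzWith.of_le_add fun s t => ?_
  rcases le_total s t with hst | hts
  · exact (monotone_cumulativeVolume hE hst).trans (le_add_of_nonneg_right dist_nonneg)
  · rw [Real.dist_eq, abs_of_nonneg (sub_nonneg.2 hts)]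
    exact cumulativeVolume_le_add hE hts

theorem cumulativeVolume_eq_zero {a t : ℝ} (hE : E ⊆ Set.Ici a) (ht : t ≤ a) :
    cumulativeVolume E t = 0 := by
  have : volume (E ∩ Set.Iic t) = 0 :=
    measure_mono_null (t := Set.Icc a t) (fun z hz => ⟨hE hz.1, hz.2⟩) (by simp [ht])
  rw [cumulativeVolume, this, ENNReal.toReal_zero]

theorem cumulativeVolume_eq_toReal_volume {b t : ℝ} (hE : E ⊆ Set.Iic b) (ht : b ≤ t) :
    cumulativeVolume E t = (volume E).toReal := by
  rw [cumulativeVolume, Set.inter_eq_left.2 (hE.trans (Set.Iic_subset_Iic.2 ht))]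

theorem exists_mem_closure_cumulativeVolume_eq {A B : ℝ} (hEI : E ⊆ Set.Icc A B)
    (hE : 0 < volume E) {τ : ℝ} (hτ : τ ∈ Set.Icc 0 (volume E).toReal) :
    ∃ y ∈ closure E, cumulativeVolume E y = τ := by
  have hEne : E.Nonempty := nonempty_of_measure_ne_zero hE.ne'
  have hAB : A ≤ B := (hEI hEne.some_mem).1.trans (hEI hEne.some_mem).2
  have hEfin : volume E ≠ ⊤ := measure_ne_top_of_subset hEI measure_Icc_lt_top.ne
  have hA : cumulativeVolume E A = 0 := cumulativeVolume_eq_zero (fun z hz => (hEI hz).1) le_rfl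
  have hB : cumulativeVolume E B = (volume E).toReal :=
    cumulativeVolume_eq_toReal_volume (fun z hz => (hEI hz).2) le_rfl
  have hcont := (lipschitzWith_one_cumulativeVolume hEfin).continuous
  rcases hτ.1.eq_or_lt with rfl | hτ0
  · have hbdd : BddBelow E := ⟨A, fun z hz => (hEI hz).1⟩
    exact ⟨sInf E, csInf_mem_closure hEne hbdd,
      cumulativeVolume_eq_zero (fun z hz => csInf_le hbdd hz) le_rfl⟩
  -- The first point `y` at which `E` has accumulated measure `τ`: `E` meets every `(y - ε, y]`.
  set S := {t | τ ≤ cumulativeVolume E t}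
  have hbdd : BddBelow S := ⟨A, fun t ht => by
    by_contra! htA
    exact (hτ0.trans_le ht).ne' (cumulativeVolume_eq_zero (fun z hz => (hEI hz).1) htA.le)⟩
  have hyS : sInf S ∈ S :=
    (isClosed_le continuous_const hcont).csInf_mem ⟨B, show τ ≤ _ from hB ▸ hτ.2⟩ hbdd
  set y := sInf S
  obtain ⟨t₀, -, ht₀⟩ := intermediate_value_Icc hAB hcont.continuousOn (hA ▸ hB ▸ hτ)
  have hyτ : cumulativeVolume E y = τ :=
    le_antisymm (ht₀ ▸ monotone_cumulativeVolume hEfin (csInf_le hbdd ht₀.ge)) hyS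
  refine ⟨y, Metric.mem_closure_iff.2 fun ε hε => ?_, hyτ⟩
  have hlt : cumulativeVolume E (y - ε) < τ :=
    not_le.1 fun h => (csInf_le hbdd h).not_gt (sub_lt_self y hε)
  have hpos : 0 < (volume (E ∩ Set.Ioc (y - ε) y)).toReal := by
    linarith [cumulativeVolume_add_volume_Ioc hEfin (sub_le_self y hε.le)]
  obtain ⟨z, hzE, hz⟩ := nonempty_of_measure_ne_zero (ENNReal.toReal_pos_iff.1 hpos).1.ne'
  refine ⟨z, hzE, ?_⟩
  rw [Real.dist_eq, abs_of_nonneg (sub_nonneg.2 hz.2)]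
  linarith [hz.1]

theorem exists_mem_closure_abs_sub_le {ι : Type*} {A B : ℝ} (hEI : E ⊆ Set.Icc A B)
    (hE : 0 < volume E) {τ : ι → ℝ} (hτ : ∀ i, τ i ∈ Set.Icc 0 (volume E).toReal) :
    ∃ y : ι → ℝ, (∀ i, y i ∈ closure E) ∧ ∀ i j, |τ i - τ j| ≤ |y i - y j| := by
  choose y hyE hyτ using fun i => exists_mem_closure_cumulativeVolume_eq hEI hE (hτ i)
  refine ⟨y, hyE, fun i j => ?_⟩
  have hEfin : volume E ≠ ⊤ := measure_ne_top_of_subset hEI measure_Icc_lt_top.ne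
  simpa [hyτ, Real.dist_eq] using
    (lipschitzWith_one_cumulativeVolume hEfin).dist_le_mul (y i) (y j)

end cumulativeVolume

namespace Lagrange

variable {ι : Type*} [DecidableEq ι] {s : Finset ι}

theorem eval_eq_sum {F : Type*} [Field F] {v : ι → F} (hvs : Set.InjOn v s) {P : F[X]}
    (hP : P.degree < #s) (x : F) :
    P.eval x = ∑ i ∈ s, P.eval (v i) * ∏ j ∈ s.erase i, (x - v j) / (v i - v j) := by
  nth_rewrite 1 [eq_interpolate hvs hP]
  simp [interpolate_apply, eval_finsetSum, Lagrange.basis, basisDivisor, eval_prod, div_eq_inv_mul]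

variable {v : ι → ℝ}

theorem abs_eval_le_sum (hvs : Set.InjOn v s) {P : ℝ[X]} (hP : P.degree < #s) (x : ℝ) :
    |P.eval x| ≤ ∑ i ∈ s, |P.eval (v i)| * ∏ j ∈ s.erase i, |x - v j| / |v i - v j| := by
  rw [eval_eq_sum hvs hP]
  refine (abs_sum_le_sum_abs _ _).trans_eq (sum_congr rfl fun i _ => ?_)
  simp only [abs_mul, abs_prod, abs_div]

theorem abs_eval_le_of_le_abs_sub {w : ι → ℝ} (hw : Set.InjOn w s) {c L M x : ℝ} (hc : 0 < c)
    (hvw : ∀ i ∈ s, ∀ j ∈ s, c * |w i - w j| ≤ |v i - v j|) (hx : ∀ j ∈ s, |x - v j| ≤ L)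
    {P : ℝ[X]} (hP : P.degree < #s) (hPv : ∀ i ∈ s, |P.eval (v i)| ≤ M) :
    |P.eval x| ≤ M * (L / c) ^ (#s - 1) * ∑ i ∈ s, ∏ j ∈ s.erase i, |w i - w j|⁻¹ := by
  have hsep : ∀ i ∈ s, ∀ j ∈ s, i ≠ j → 0 < c * |w i - w j| := fun i hi j hj hij =>
    mul_pos hc (abs_pos.2 (sub_ne_zero.2 (hw.ne hi hj hij)))
  have hvs : Set.InjOn v s := fun i hi j hj hv => by_contra fun hij => by
    simpa [hv] using (hsep i hi j hj hij).trans_le (hvw i hi j hj)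
  rw [mul_sum]
  refine (abs_eval_le_sum hvs hP x).trans (sum_le_sum fun i hi => ?_)
  have hM : 0 ≤ M := (abs_nonneg _).trans (hPv i hi)
  rw [← card_erase_of_mem hi, ← prod_const, mul_assoc, ← prod_mul_distrib]
  gcongr with j hj
  · exact hPv i hi
  obtain ⟨hji, hj⟩ := mem_erase.1 hj
  calc |x - v j| / |v i - v j| ≤ L / (c * |w i - w j|) :=
        div_le_div₀ ((abs_nonneg _).trans (hx j hj)) (hx j hj) (hsep i hi j hj hji.symm)
          (hvw i hi j hj)
    _ = L / c * |w i - w j|⁻¹ := by rw [div_mul_eq_div_div, div_eq_mul_inv]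

end Lagrange

namespace Polynomial.Chebyshev

-- The Lagrange formula for the leading coefficient of `T_n` at its extremal points, where
-- `T_n` alternates in sign exactly like the products `∏ j ≠ i, (node n i - node n j)`.
theorem sum_prod_inv_abs_node_sub_node (n : ℕ) :
    ∑ i ∈ range (n + 1), ∏ j ∈ (range (n + 1)).erase i, |node n i - node n j|⁻¹ =
      2 ^ (n - 1) := by
  have hdeg : (T ℝ n).degree < #(range (n + 1)) := by
    rw [degree_T, card_range]; exact_mod_cast n.lt_succ_self
  have h := Lagrange.coeff_eq_sum (strictAntiOn_node n).injOn hdeg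
  rw [card_range, Nat.add_sub_cancel] at h
  have hlead : (T ℝ n).coeff n = 2 ^ (n - 1) := by
    simpa [leadingCoeff] using leadingCoeff_T ℝ n
  rw [← hlead, h]
  refine sum_congr rfl fun i hi => ?_
  have hi' : i ≤ n := Nat.lt_succ_iff.1 (mem_range.1 hi)
  have hpos := zero_lt_prod_node_sub_node hi'
  rw [eval_T_real_node (mem_Iic.2 hi'), prod_inv_distrib, ← abs_prod]
  generalize ∏ j ∈ (range (n + 1)).erase i, (node n i - node n j) = P at hpos ⊢
  calc |P|⁻¹ = ((-1) ^ i * P)⁻¹ := by rw [← abs_of_pos hpos, abs_mul, abs_neg_one_pow, one_mul]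
    _ = (-1) ^ i / P := by rw [mul_inv, ← inv_pow, inv_neg_one, div_eq_mul_inv]

end Polynomial.Chebyshev

theorem exists_mem_closure_abs_node_sub_le {E : Set ℝ} {A B : ℝ} (hEI : E ⊆ Set.Icc A B)
    (hE : 0 < volume E) (d : ℕ) :
    ∃ y : ℕ → ℝ, (∀ i, y i ∈ closure E) ∧
      ∀ i j, (volume E).toReal / 2 * |Chebyshev.node d i - Chebyshev.node d j| ≤ |y i - y j| := by
  set m := (volume E).toReal
  have hm : 0 ≤ m / 2 := by positivity
  obtain ⟨y, hyE, hy⟩ := exists_mem_closure_abs_sub_le hEI hE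
    (τ := fun i => m / 2 * (1 - Chebyshev.node d i)) fun i => by
      have hc := Chebyshev.node_mem_Icc (n := d) (i := i)
      exact ⟨by nlinarith [hc.2], by nlinarith [hc.1]⟩
  refine ⟨y, hyE, fun i j => ?_⟩
  simpa only [← mul_sub, abs_mul, abs_of_nonneg hm, sub_sub_sub_cancel_left,
    abs_sub_comm (Chebyshev.node d j)] using hy i j

theorem le_csSup_image_of_mem_closure {α : Type*} [TopologicalSpace α] {f : α → ℝ}
    (hf : Continuous f) {E : Set α} (hE : BddAbove (f '' E)) {z : α} (hz : z ∈ closure E) :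
    f z ≤ sSup (f '' E) :=
  closure_minimal (fun y hy => le_csSup hE ⟨y, hy, rfl⟩) (isClosed_Iic.preimage hf) hz

theorem remez_inequality_general (d : ℕ) (p : Polynomial ℝ) (hdeg : p.natDegree ≤ d)
    (A B : ℝ) (E : Set ℝ) (hEI : E ⊆ Set.Icc A B)
    (hpos : 0 < volume E) :
    ∀ x ∈ Set.Icc A B,
      |p.eval x| ≤ (4 * (B - A) / (volume E).toReal) ^ d *
        sSup ((fun y => |p.eval y|) '' E) := by
  intro x hx
  set m := (volume E).toReal
  set M := sSup ((fun y => |p.eval y|) '' E)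
  have hm : 0 < m :=
    ENNReal.toReal_pos hpos.ne' (measure_ne_top_of_subset hEI measure_Icc_lt_top.ne)
  have hcont : Continuous fun y => |p.eval y| := continuous_abs.comp p.continuous
  have hM : ∀ z ∈ closure E, |p.eval z| ≤ M := fun z hz => le_csSup_image_of_mem_closure hcont
    ((isCompact_Icc.image hcont).bddAbove.mono (Set.image_mono hEI)) hz
  obtain ⟨y, hyE, hsep⟩ := exists_mem_closure_abs_node_sub_le hEI hpos d
  have hyI : ∀ j, |x - y j| ≤ B - A := fun j => by
    simpa [← Real.dist_eq] using
      Real.dist_le_of_mem_Icc hx (closure_minimal hEI isClosed_Icc (hyE j))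
  have hp : p.degree < #(range (d + 1)) := by
    rw [card_range]
    exact (degree_le_of_natDegree_le hdeg).trans_lt (by exact_mod_cast d.lt_succ_self)
  have hM0 : 0 ≤ M := (abs_nonneg _).trans (hM _ (hyE 0))
  have hL : 0 ≤ B - A := sub_nonneg.2 (hx.1.trans hx.2)
  calc |p.eval x|
      ≤ M * ((B - A) / (m / 2)) ^ d * 2 ^ (d - 1) := by
        have h := Lagrange.abs_eval_le_of_le_abs_sub (Chebyshev.strictAntiOn_node d).injOn
          (half_pos hm) (fun i _ j _ => hsep i j) (fun j _ => hyI j) hp (fun i _ => hM _ (hyE i))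
        rwa [Chebyshev.sum_prod_inv_abs_node_sub_node, card_range, Nat.add_sub_cancel] at h
    _ ≤ M * ((B - A) / (m / 2)) ^ d * 2 ^ d :=
        mul_le_mul_of_nonneg_left (pow_le_pow_right₀ one_le_two (d.sub_le 1))
          (mul_nonneg hM0 (pow_nonneg (div_nonneg hL (half_pos hm).le) d))
    _ = (4 * (B - A) / m) ^ d * M := by
        rw [mul_assoc, ← mul_pow, mul_comm]; congr 2; field_simp; ring

/-- Remez inequality: if a real polynomial of degree at most `d` is controlled on a
measurable subset `E ⊆ I = [A,B]` of positive measure, then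
`max_I |p| ≤ (4|I|/|E|)^d · sup_E |p|`. -/
theorem remez_inequality (d : ℕ) (p : Polynomial ℝ) (hdeg : p.natDegree ≤ d)
    (A B : ℝ) (hAB : A ≤ B) (E : Set ℝ) (hE : MeasurableSet E) (hEI : E ⊆ Set.Icc A B)
    (hpos : 0 < volume E) :
    ∀ x ∈ Set.Icc A B,
      |p.eval x| ≤ (4 * (B - A) / (volume E).toReal) ^ d *
        sSup ((fun y => |p.eval y|) '' E) :=
  remez_inequality_general d p hdeg A B E hEI hpos
end

section
/- (Unique harmonic extension from two sides of a diamond rectangle) Let a₁ ≤ a₂ and b₁ ≤ b₂ be half-integers with a₁+b₁ ∈ ℤ, let R = R_{[a₁,a₂],[b₁,b₂]} be the corresponding diamond rectangle, and set a(R) = a₂−a₁+1/2, b(R) = b₂−b₁+1/2. Let S = {(s,k) ∈ R : min(s−a₁, k−b₁) ∈ {0, 1/2}}. Then every function U₀ : S → ℝ has a unique extension U : R → ℝ that is discrete harmonic on R, and this extension satisfies max_{R} |U| ≤ 7^{a(R)+b(R)} · max_{S} |U₀|. -/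
/-- `x` is a half-integer. -/
def HalfInt (x : ℚ) : Prop := ∃ n : ℤ, x = (n : ℚ) / 2

/-- The rotated lattice `ℤ²_⋄ = {(s,k) ∈ (½ℤ)² : s + k ∈ ℤ}`. -/
def Zdiamond : Set (ℚ × ℚ) :=
  {p | HalfInt p.1 ∧ HalfInt p.2 ∧ ∃ n : ℤ, p.1 + p.2 = (n : ℚ)}

/-- The diamond rectangle `R_{[a₁,a₂],[b₁,b₂]}`. -/
def dRect (a₁ a₂ b₁ b₂ : ℚ) : Set (ℚ × ℚ) :=
  {p | p ∈ Zdiamond ∧ a₁ ≤ p.1 ∧ p.1 ≤ a₂ ∧ b₁ ≤ p.2 ∧ p.2 ≤ b₂}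

/-- `U` is discrete harmonic on the subset `S` of `ℤ²_⋄`:
`4U(s+1/2,k+1/2) = U(s,k) + U(s+1,k) + U(s,k+1) + U(s+1,k+1)` whenever all five
points lie in `S`. -/
def DHarmOn (U : ℚ × ℚ → ℝ) (S : Set (ℚ × ℚ)) : Prop :=
  ∀ s k : ℚ, (s, k) ∈ S → (s + 1, k) ∈ S → (s, k + 1) ∈ S → (s + 1, k + 1) ∈ S →
    (s + 1/2, k + 1/2) ∈ S →
    4 * U (s + 1/2, k + 1/2) = U (s, k) + U (s + 1, k) + U (s, k + 1) + U (s + 1, k + 1)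

/-- The two lower-left boundary layers `S` of the rectangle. -/
def lowerLayers (a₁ a₂ b₁ b₂ : ℚ) : Set (ℚ × ℚ) :=
  {p | p ∈ dRect a₁ a₂ b₁ b₂ ∧ min (p.1 - a₁) (p.2 - b₁) ∈ ({0, 1/2} : Set ℚ)}

/-- The recursive extension on coordinates. -/
noncomputable def extFun (g : ℕ → ℕ → ℝ) (i j : ℕ) : ℝ :=
  if i ≤ 1 ∨ j ≤ 1 then g i j
  else 4 * extFun g (i-1) (j-1) - extFun g (i-2) (j-2) - extFun g i (j-2) - extFun g (i-2) j
termination_by i + j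
decreasing_by all_goals omega

lemma extFun_low (g : ℕ → ℕ → ℝ) {i j : ℕ} (h : i ≤ 1 ∨ j ≤ 1) :
    extFun g i j = g i j := by rw [extFun, if_pos h]

lemma extFun_rec (g : ℕ → ℕ → ℝ) (i j : ℕ) :
    extFun g (i+2) (j+2) =
      4 * extFun g (i+1) (j+1) - extFun g i j - extFun g (i+2) j - extFun g i (j+2) := by
  rw [extFun, if_neg (by omega)]
  norm_num

lemma extFun_bound (g : ℕ → ℕ → ℝ) (M : ℝ) (hM : 0 ≤ M) (I J : ℕ)
    (hg : ∀ i j : ℕ, i ≤ I → j ≤ J → (i + j) % 2 = 0 → i ≤ 1 ∨ j ≤ 1 → |g i j| ≤ M) :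
    ∀ n : ℕ, ∀ i j : ℕ, i + j = 2 * n → i ≤ I → j ≤ J → |extFun g i j| ≤ 7 ^ n * M := by
  intro n
  induction n using Nat.strong_induction_on with
  | _ n IH =>
    intro i j hpar hi hj
    by_cases h : i ≤ 1 ∨ j ≤ 1
    · rw [extFun_low g h]
      have h1 : (1:ℝ) ≤ 7 ^ n := one_le_pow₀ (by norm_num)
      calc |g i j| ≤ M := hg i j hi hj (by omega) h
        _ ≤ 7 ^ n * M := by nlinarith
    · obtain ⟨i', rfl⟩ : ∃ t, i = t + 2 := ⟨i - 2, by omega⟩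
      obtain ⟨j', rfl⟩ : ∃ t, j = t + 2 := ⟨j - 2, by omega⟩
      obtain ⟨m, rfl⟩ : ∃ m, n = m + 2 := ⟨n - 2, by omega⟩
      rw [extFun_rec]
      have hA := IH (m+1) (by omega) (i'+1) (j'+1) (by omega) (by omega) (by omega)
      have hB := IH m (by omega) i' j' (by omega) (by omega) (by omega)
      have hC := IH (m+1) (by omega) (i'+2) j' (by omega) (by omega) (by omega)
      have hD := IH (m+1) (by omega) i' (j'+2) (by omega) (by omega) (by omega)
      have e1 : (7:ℝ)^(m+1) * M = 7*(7^m*M) := by ring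
      have e2 : (7:ℝ)^(m+2) * M = 49*(7^m*M) := by ring
      rw [e1] at hA hC hD
      rw [e2]
      rw [abs_le] at hA hB hC hD ⊢
      constructor <;> linarith [hA.1, hA.2, hB.1, hB.2, hC.1, hC.2, hD.1, hD.2]

lemma halfint_coord {a x : ℚ} (ha : HalfInt a) (hx : HalfInt x) (h : a ≤ x) :
    ∃ i : ℕ, x = a + (i:ℚ)/2 ∧ (⌊2*(x-a)⌋).toNat = i := by
  obtain ⟨n, rfl⟩ := ha
  obtain ⟨m, rfl⟩ := hx
  have hnm : n ≤ m := by exact_mod_cast (by linarith : (n:ℚ) ≤ m)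
  refine ⟨(m - n).toNat, ?_, ?_⟩
  · have e : (((m - n).toNat : ℤ) : ℚ) = (m:ℚ) - (n:ℚ) := by
      rw [Int.toNat_of_nonneg (by omega : (0:ℤ) ≤ m - n)]; push_cast; ring
    push_cast at e
    rw [e]; ring
  · have h2 : 2*((m:ℚ)/2 - (n:ℚ)/2) = ((m - n : ℤ) : ℚ) := by push_cast; ring
    rw [h2, Int.floor_intCast]

/-- Unique discrete harmonic extension from two sides of a diamond rectangle,
with the bound `max_R |U| ≤ 7^{a(R)+b(R)} · max_S |U₀|`. -/
theorem harmonic_extension_from_two_sides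
    (a₁ a₂ b₁ b₂ : ℚ) (ha₁ : HalfInt a₁) (ha₂ : HalfInt a₂) (hb₁ : HalfInt b₁)
    (hb₂ : HalfInt b₂) (hint : ∃ n : ℤ, a₁ + b₁ = (n : ℚ))
    (ha : a₁ ≤ a₂) (hb : b₁ ≤ b₂) (U₀ : ℚ × ℚ → ℝ) :
    ∃ U : ℚ × ℚ → ℝ,
      (∀ p ∈ lowerLayers a₁ a₂ b₁ b₂, U p = U₀ p) ∧
      DHarmOn U (dRect a₁ a₂ b₁ b₂) ∧
      (∀ M : ℝ, (∀ p ∈ lowerLayers a₁ a₂ b₁ b₂, |U₀ p| ≤ M) →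
        ∀ p ∈ dRect a₁ a₂ b₁ b₂,
          |U p| ≤ (7 : ℝ) ^ ((((a₂ - a₁ + 1/2) + (b₂ - b₁ + 1/2) : ℚ) : ℝ)) * M) ∧
      (∀ V : ℚ × ℚ → ℝ, (∀ p ∈ lowerLayers a₁ a₂ b₁ b₂, V p = U₀ p) →
        DHarmOn V (dRect a₁ a₂ b₁ b₂) → ∀ p ∈ dRect a₁ a₂ b₁ b₂, V p = U p) := by
  obtain ⟨I, hIa, -⟩ := halfint_coord ha₁ ha₂ ha
  obtain ⟨J, hJb, -⟩ := halfint_coord hb₁ hb₂ hb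
  have hI : 2*(a₂ - a₁) = (I:ℚ) := by rw [hIa]; ring
  have hJ : 2*(b₂ - b₁) = (J:ℚ) := by rw [hJb]; ring
  set g : ℕ → ℕ → ℝ := fun i j => U₀ (a₁ + (i:ℚ)/2, b₁ + (j:ℚ)/2) with hg
  have pt_mem : ∀ i j : ℕ, i ≤ I → j ≤ J → (i + j) % 2 = 0 →
      ((a₁ + (i:ℚ)/2, b₁ + (j:ℚ)/2) : ℚ × ℚ) ∈ dRect a₁ a₂ b₁ b₂ := by
    intro i j hi hj hpar
    obtain ⟨na, hna⟩ := ha₁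
    obtain ⟨nb, hnb⟩ := hb₁
    obtain ⟨m0, hm0⟩ := hint
    obtain ⟨t, ht⟩ : ∃ t, i + j = 2*t := ⟨(i+j)/2, by omega⟩
    have hti : (i:ℚ) + (j:ℚ) = 2*(t:ℚ) := by exact_mod_cast ht
    have hiq : (i:ℚ) ≤ (I:ℚ) := by exact_mod_cast hi
    have hjq : (j:ℚ) ≤ (J:ℚ) := by exact_mod_cast hj
    have hi0 : (0:ℚ) ≤ (i:ℚ) := Nat.cast_nonneg i
    have hj0 : (0:ℚ) ≤ (j:ℚ) := Nat.cast_nonneg j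
    simp only [dRect, Zdiamond, Set.mem_setOf_eq]
    refine ⟨⟨⟨na + (i:ℤ), ?_⟩, ⟨nb + (j:ℤ), ?_⟩, ⟨m0 + (t:ℤ), ?_⟩⟩, ?_, ?_, ?_, ?_⟩
    · show a₁ + (i:ℚ)/2 = ((na + (i:ℤ) : ℤ):ℚ)/2
      rw [hna]; push_cast; ring
    · show b₁ + (j:ℚ)/2 = ((nb + (j:ℤ) : ℤ):ℚ)/2
      rw [hnb]; push_cast; ring
    · show a₁ + (i:ℚ)/2 + (b₁ + (j:ℚ)/2) = ((m0 + (t:ℤ) : ℤ):ℚ)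
      push_cast; linarith
    · show a₁ ≤ a₁ + (i:ℚ)/2
      linarith
    · show a₁ + (i:ℚ)/2 ≤ a₂
      linarith
    · show b₁ ≤ b₁ + (j:ℚ)/2
      linarith
    · show b₁ + (j:ℚ)/2 ≤ b₂
      linarith
  have layer_mem : ∀ i j : ℕ, i ≤ I → j ≤ J → (i + j) % 2 = 0 → (i ≤ 1 ∨ j ≤ 1) →
      ((a₁ + (i:ℚ)/2, b₁ + (j:ℚ)/2) : ℚ × ℚ) ∈ lowerLayers a₁ a₂ b₁ b₂ := by
    intro i j hi hj hpar hsm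
    simp only [lowerLayers, Set.mem_setOf_eq]
    refine ⟨pt_mem i j hi hj hpar, ?_⟩
    show min ((a₁ + (i:ℚ)/2) - a₁) ((b₁ + (j:ℚ)/2) - b₁) ∈ ({0, 1/2} : Set ℚ)
    have e1 : (a₁ + (i:ℚ)/2) - a₁ = (i:ℚ)/2 := by ring
    have e2 : (b₁ + (j:ℚ)/2) - b₁ = (j:ℚ)/2 := by ring
    rw [e1, e2]
    have hmm : min ((i:ℚ)/2) ((j:ℚ)/2) = ((min i j : ℕ):ℚ)/2 := by
      rcases le_total i j with h | h
      · rw [min_eq_left (by gcongr), min_eq_left h]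
      · rw [min_eq_right (by gcongr), min_eq_right h]
    rw [hmm]
    have : min i j = 0 ∨ min i j = 1 := by omega
    rcases this with h | h <;> rw [h] <;> norm_num
  have hrep : ∀ p ∈ dRect a₁ a₂ b₁ b₂, ∃ i j : ℕ, i ≤ I ∧ j ≤ J ∧ (i + j) % 2 = 0 ∧
      p = (a₁ + (i:ℚ)/2, b₁ + (j:ℚ)/2) ∧
      (⌊2*(p.1 - a₁)⌋).toNat = i ∧ (⌊2*(p.2 - b₁)⌋).toNat = j := by
    intro p hp
    simp only [dRect, Zdiamond, Set.mem_setOf_eq] at hp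
    obtain ⟨⟨hx, hy, m1, hsum⟩, h1, h2, h3, h4⟩ := hp
    obtain ⟨i, hxi, hfi⟩ := halfint_coord ha₁ hx h1
    obtain ⟨j, hyj, hfj⟩ := halfint_coord hb₁ hy h3
    obtain ⟨m0, hm0⟩ := hint
    refine ⟨i, j, ?_, ?_, ?_, Prod.ext hxi hyj, hfi, hfj⟩
    · have : (i:ℚ) ≤ (I:ℚ) := by rw [hxi] at h2; linarith
      exact_mod_cast this
    · have : (j:ℚ) ≤ (J:ℚ) := by rw [hyj] at h4; linarith
      exact_mod_cast this
    · have hq : ((i:ℤ) + (j:ℤ) : ℤ) = ((2*(m1 - m0) : ℤ) : ℤ) := by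
        have : (i:ℚ) + (j:ℚ) = ((2*(m1 - m0) : ℤ) : ℚ) := by
          rw [hxi, hyj] at hsum
          push_cast
          linarith
        exact_mod_cast this
      omega
  refine ⟨fun p => extFun g ((⌊2*(p.1 - a₁)⌋).toNat) ((⌊2*(p.2 - b₁)⌋).toNat), ?_, ?_, ?_, ?_⟩
  · -- boundary values
    intro p hp
    have hpR : p ∈ dRect a₁ a₂ b₁ b₂ := hp.1
    have hmin := hp.2
    obtain ⟨i, j, hi, hj, hpar, hpe, hfi, hfj⟩ := hrep p hpR
    show extFun g ((⌊2*(p.1 - a₁)⌋).toNat) ((⌊2*(p.2 - b₁)⌋).toNat) = U₀ p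
    rw [hfi, hfj]
    have hsm : i ≤ 1 ∨ j ≤ 1 := by
      by_contra hcon
      push_neg at hcon
      rw [hpe] at hmin
      have e1 : ((a₁ + (i:ℚ)/2, b₁ + (j:ℚ)/2) : ℚ × ℚ).1 - a₁ = (i:ℚ)/2 := by
        show (a₁ + (i:ℚ)/2) - a₁ = (i:ℚ)/2; ring
      have e2 : ((a₁ + (i:ℚ)/2, b₁ + (j:ℚ)/2) : ℚ × ℚ).2 - b₁ = (j:ℚ)/2 := by
        show (b₁ + (j:ℚ)/2) - b₁ = (j:ℚ)/2; ring
      rw [e1, e2] at hmin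
      have h2i : (2:ℚ) ≤ (i:ℚ) := by exact_mod_cast (by omega : 2 ≤ i)
      have h2j : (2:ℚ) ≤ (j:ℚ) := by exact_mod_cast (by omega : 2 ≤ j)
      have hge : (1:ℚ) ≤ min ((i:ℚ)/2) ((j:ℚ)/2) := le_min (by linarith) (by linarith)
      simp only [Set.mem_insert_iff, Set.mem_singleton_iff] at hmin
      rcases hmin with hm | hm <;> rw [hm] at hge <;> norm_num at hge
    rw [extFun_low g hsm]
    simp only [hg]
    rw [← hpe]
  · -- harmonicity
    intro s k h1 _ _ _ _
    obtain ⟨i, j, hi, hj, hpar, hpe, hfi, hfj⟩ := hrep (s, k) h1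
    have hs : s = a₁ + (i:ℚ)/2 := congrArg Prod.fst hpe
    have hk : k = b₁ + (j:ℚ)/2 := congrArg Prod.snd hpe
    have c1 : (⌊2*(s - a₁)⌋).toNat = i := hfi
    have d1 : (⌊2*(k - b₁)⌋).toNat = j := hfj
    have c2 : (⌊2*(s + 1 - a₁)⌋).toNat = i + 2 := by
      have e : 2*(s + 1 - a₁) = ((i + 2 : ℕ):ℚ) := by rw [hs]; push_cast; ring
      rw [e, Int.floor_natCast]; omega
    have c3 : (⌊2*(s + 1/2 - a₁)⌋).toNat = i + 1 := by
      have e : 2*(s + 1/2 - a₁) = ((i + 1 : ℕ):ℚ) := by rw [hs]; push_cast; ring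
      rw [e, Int.floor_natCast]; omega
    have d2 : (⌊2*(k + 1 - b₁)⌋).toNat = j + 2 := by
      have e : 2*(k + 1 - b₁) = ((j + 2 : ℕ):ℚ) := by rw [hk]; push_cast; ring
      rw [e, Int.floor_natCast]; omega
    have d3 : (⌊2*(k + 1/2 - b₁)⌋).toNat = j + 1 := by
      have e : 2*(k + 1/2 - b₁) = ((j + 1 : ℕ):ℚ) := by rw [hk]; push_cast; ring
      rw [e, Int.floor_natCast]; omega
    show 4 * extFun g ((⌊2*(s + 1/2 - a₁)⌋).toNat) ((⌊2*(k + 1/2 - b₁)⌋).toNat) =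
      extFun g ((⌊2*(s - a₁)⌋).toNat) ((⌊2*(k - b₁)⌋).toNat) +
      extFun g ((⌊2*(s + 1 - a₁)⌋).toNat) ((⌊2*(k - b₁)⌋).toNat) +
      extFun g ((⌊2*(s - a₁)⌋).toNat) ((⌊2*(k + 1 - b₁)⌋).toNat) +
      extFun g ((⌊2*(s + 1 - a₁)⌋).toNat) ((⌊2*(k + 1 - b₁)⌋).toNat)
    rw [c1, c2, c3, d1, d2, d3]
    have hrec := extFun_rec g i j
    linarith
  · -- bound
    intro M hM p hp
    obtain ⟨i, j, hi, hj, hpar, hpe, hfi, hfj⟩ := hrep p hp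
    have hM0 : 0 ≤ M :=
      le_trans (abs_nonneg _) (hM _ (layer_mem 0 0 (Nat.zero_le _) (Nat.zero_le _) rfl (Or.inl (by omega))))
    have hgb : ∀ i j : ℕ, i ≤ I → j ≤ J → (i + j) % 2 = 0 → i ≤ 1 ∨ j ≤ 1 → |g i j| ≤ M := by
      intro i j hi hj hp hs
      simp only [hg]
      exact hM _ (layer_mem i j hi hj hp hs)
    obtain ⟨n, hn⟩ : ∃ n, i + j = 2*n := ⟨(i+j)/2, by omega⟩
    have hb1 := extFun_bound g M hM0 I J hgb n i j hn hi hj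
    show |extFun g ((⌊2*(p.1 - a₁)⌋).toNat) ((⌊2*(p.2 - b₁)⌋).toNat)| ≤ _
    rw [hfi, hfj]
    refine le_trans hb1 (mul_le_mul_of_nonneg_right ?_ hM0)
    have hexp : ((n:ℚ)) ≤ (a₂ - a₁ + 1/2) + (b₂ - b₁ + 1/2) := by
      have h1 : (i:ℚ) ≤ (I:ℚ) := by exact_mod_cast hi
      have h2 : (j:ℚ) ≤ (J:ℚ) := by exact_mod_cast hj
      have h3 : (i:ℚ) + (j:ℚ) = 2*(n:ℚ) := by exact_mod_cast hn
      linarith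
    have hexpR : ((n:ℕ):ℝ) ≤ (((a₂ - a₁ + 1/2) + (b₂ - b₁ + 1/2) : ℚ) : ℝ) := by
      exact_mod_cast hexp
    calc (7:ℝ)^n = (7:ℝ) ^ ((n:ℝ)) := (Real.rpow_natCast 7 n).symm
      _ ≤ _ := Real.rpow_le_rpow_of_exponent_le (by norm_num) hexpR
  · -- uniqueness
    intro V hV hharm p hp
    obtain ⟨i, j, hi, hj, hpar, hpe, hfi, hfj⟩ := hrep p hp
    obtain ⟨n, hn⟩ : ∃ n, i + j = 2*n := ⟨(i+j)/2, by omega⟩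
    have main : ∀ n : ℕ, ∀ i j : ℕ, i + j = 2*n → i ≤ I → j ≤ J →
        V (a₁ + (i:ℚ)/2, b₁ + (j:ℚ)/2) = extFun g i j := by
      intro n
      induction n using Nat.strong_induction_on with
      | _ n IH =>
        intro i j hpar' hi' hj'
        by_cases hsm : i ≤ 1 ∨ j ≤ 1
        · rw [extFun_low g hsm]
          simp only [hg]
          exact hV _ (layer_mem i j hi' hj' (by omega) hsm)
        · push_neg at hsm
          obtain ⟨i', rfl⟩ : ∃ t, i = t + 2 := ⟨i - 2, by omega⟩
          obtain ⟨j', rfl⟩ : ∃ t, j = t + 2 := ⟨j - 2, by omega⟩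
          obtain ⟨m, rfl⟩ : ∃ m, n = m + 2 := ⟨n - 2, by omega⟩
          have ea : a₁ + ((i' : ℕ):ℚ)/2 + 1 = a₁ + ((i' + 2 : ℕ):ℚ)/2 := by push_cast; ring
          have eah : a₁ + ((i' : ℕ):ℚ)/2 + 1/2 = a₁ + ((i' + 1 : ℕ):ℚ)/2 := by push_cast; ring
          have eb : b₁ + ((j' : ℕ):ℚ)/2 + 1 = b₁ + ((j' + 2 : ℕ):ℚ)/2 := by push_cast; ring
          have ebh : b₁ + ((j' : ℕ):ℚ)/2 + 1/2 = b₁ + ((j' + 1 : ℕ):ℚ)/2 := by push_cast; ring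
          have m1 := pt_mem i' j' (by omega) (by omega) (by omega)
          have m2 := pt_mem (i'+2) j' (by omega) (by omega) (by omega)
          have m3 := pt_mem i' (j'+2) (by omega) (by omega) (by omega)
          have m4 := pt_mem (i'+2) (j'+2) (by omega) (by omega) (by omega)
          have m5 := pt_mem (i'+1) (j'+1) (by omega) (by omega) (by omega)
          rw [← ea] at m2 m4
          rw [← eb] at m3 m4
          rw [← eah, ← ebh] at m5
          have hh := hharm (a₁ + (i':ℚ)/2) (b₁ + (j':ℚ)/2) m1 m2 m3 m4 m5
          rw [ea, eb, eah, ebh] at hh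
          have hA := IH (m+1) (by omega) (i'+1) (j'+1) (by omega) (by omega) (by omega)
          have hB := IH m (by omega) i' j' (by omega) (by omega) (by omega)
          have hC := IH (m+1) (by omega) (i'+2) j' (by omega) (by omega) (by omega)
          have hD := IH (m+1) (by omega) i' (j'+2) (by omega) (by omega) (by omega)
          rw [extFun_rec]
          linarith
    show V p = extFun g ((⌊2*(p.1 - a₁)⌋).toNat) ((⌊2*(p.2 - b₁)⌋).toNat)
    rw [hfi, hfj, hpe]
    exact main n i j hn hi hj
end

section
/- (Polynomial structure on diagonals) Let R = R_{[a₁,a₂],[b₁,b₂]} be a diamond rectangle and let U be discrete harmonic on R with U(s,b₁) = 0 and U(s,b₁+1/2) = 0 for all s with (s,b₁) ∈ R, respectively (s,b₁+1/2) ∈ R. Then for every half-integer k with b₁+1 ≤ k ≤ b₂ there is a real polynomial p_k of degree at most 2(k−b₁)−2 such that U(s,k) = (−1)^{s+k} p_k(s) for every s with (s,k) ∈ R (note s+k ∈ ℤ, so (−1)^{s+k} is well defined). -/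
/-!
On the diagonal `k` put `V_k(s) = (-1)^(s+k) U(s, k)`. The harmonic relation on the square with
bottom corner `(s, k - 1)` writes `V_k(s + 1) - V_k(s)` as
`V_{k-1}(s + 1) - V_{k-1}(s) - 4 V_{k-1/2}(s + 1/2)`. By induction over the diagonals, starting
from the two vanishing bottom ones, this forward difference is a polynomial of degree at most
`2(k - b₁) - 3`; a polynomial has a discrete antiderivative of one degree more, and `V_k` differs
from it by a constant along the diagonal.
-/

open Polynomial

namespace Polynomial

variable {K : Type*} [Field K] [CharZero K]

lemma degree_bernoulli_le (n : ℕ) : (bernoulli n).degree ≤ n := by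
  rw [degree_le_iff_coeff_zero]
  intro i hi
  rw [coeff_bernoulli, if_neg (by exact_mod_cast hi.not_ge)]

lemma taylor_one_bernoulli_sub (n : ℕ) :
    taylor 1 (bernoulli (n + 1)) - bernoulli (n + 1) = C ((n : ℚ) + 1) * X ^ n := by
  rw [taylor_apply, C_1, add_comm X 1, bernoulli_comp_one_add_X]
  simp [nsmul_eq_mul]

/-- The discrete antiderivative is assembled from Bernoulli polynomials, since
`Bᵢ₊₁(x + 1) - Bᵢ₊₁(x) = (i + 1) xⁱ`. -/
theorem exists_mem_degreeLT_taylor_one_sub_eq {n : ℕ} {q : K[X]} (hq : q ∈ degreeLT K n) :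
    ∃ P ∈ degreeLT K (n + 1), taylor 1 P - P = q := by
  set B : ℕ → K[X] := fun i => (bernoulli (i + 1)).map (algebraMap ℚ K)
  have hB : ∀ i, taylor 1 (B i) - B i = C ((i : K) + 1) * X ^ i := fun i => by
    simpa [B, map_taylor] using congrArg (map (algebraMap ℚ K)) (taylor_one_bernoulli_sub i)
  refine ⟨∑ i ∈ Finset.range n, C (q.coeff i / ((i : K) + 1)) * B i, ?_, ?_⟩
  · refine Submodule.sum_mem _ fun i hi => ?_
    rw [← smul_eq_C_mul, mem_degreeLT]
    refine (degree_smul_le _ _).trans_lt (degree_map_le.trans_lt ?_)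
    refine (degree_bernoulli_le _).trans_lt ?_
    exact_mod_cast Nat.succ_lt_succ (Finset.mem_range.1 hi)
  · simp only [map_sum, taylor_mul, taylor_C, ← Finset.sum_sub_distrib, ← mul_sub, hB]
    have hcancel : ∀ i : ℕ, C (q.coeff i / ((i : K) + 1)) * (C ((i : K) + 1) * X ^ i)
        = C (q.coeff i) * X ^ i := fun i => by
      rw [← mul_assoc, ← C_mul, div_mul_cancel₀ _ (Nat.cast_add_one_ne_zero i)]
    simp only [hcancel]
    rcases eq_or_ne q 0 with rfl | hq0
    · simp
    · exact (as_sum_range_C_mul_X_pow' q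
        ((natDegree_lt_iff_degree_lt hq0).2 (mem_degreeLT.1 hq))).symm

lemma natDegree_lt_of_mem_degreeLT {R : Type*} [Semiring R] {n : ℕ} {p : R[X]} (hn : 0 < n)
    (hp : p ∈ degreeLT R n) : p.natDegree < n := by
  rcases eq_or_ne p 0 with rfl | hp0
  · simpa using hn
  · exact (natDegree_lt_iff_degree_lt hp0).2 (mem_degreeLT.1 hp)

end Polynomial

lemma HalfInt.add {x y : ℚ} (hx : HalfInt x) (hy : HalfInt y) : HalfInt (x + y) := by
  obtain ⟨m, rfl⟩ := hx
  obtain ⟨n, rfl⟩ := hy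
  exact ⟨m + n, by push_cast; ring⟩

lemma halfInt_half : HalfInt (1 / 2) := ⟨1, by norm_num⟩

lemma HalfInt.exists_nat_eq_add {x y : ℚ} (hx : HalfInt x) (hy : HalfInt y) (hxy : x ≤ y) :
    ∃ m : ℕ, y = x + m / 2 := by
  obtain ⟨i, rfl⟩ := hx
  obtain ⟨j, rfl⟩ := hy
  have hij : i ≤ j := by exact_mod_cast (show (i : ℚ) ≤ j by linarith)
  refine ⟨(j - i).toNat, ?_⟩
  have hcast : ((j - i).toNat : ℚ) = j - i := by
    exact_mod_cast Int.toNat_of_nonneg (sub_nonneg.2 hij)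
  rw [hcast]
  ring

lemma mem_Zdiamond_iff {s k : ℚ} : (s, k) ∈ Zdiamond ↔ HalfInt k ∧ ∃ n : ℤ, s + k = n := by
  refine ⟨fun ⟨_, hk, hn⟩ => ⟨hk, hn⟩, fun ⟨hk, n, hn⟩ => ⟨?_, hk, n, hn⟩⟩
  obtain ⟨m, hm⟩ := hk
  exact ⟨2 * n - m, by push_cast; linarith⟩

theorem Set.OrdConnected.exists_forall_eq_of_succ {α : Type*} [Nonempty α] {S : Set ℤ}
    (hS : S.OrdConnected) {f : ℤ → α} (hf : ∀ n ∈ S, n + 1 ∈ S → f (n + 1) = f n) :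
    ∃ c, ∀ n ∈ S, f n = c := by
  rcases S.eq_empty_or_nonempty with rfl | ⟨m, hm⟩
  · exact ⟨Classical.arbitrary α, by simp⟩
  have hup : ∀ a ∈ S, ∀ b, a ≤ b → b ∈ S → f b = f a := by
    intro a ha
    refine Int.leInduction (fun _ => rfl) fun n han ih hn₁ => ?_
    have hn : n ∈ S := hS.out ha hn₁ ⟨han, Int.le_add_one le_rfl⟩
    rw [hf n hn hn₁, ih hn]
  refine ⟨f m, fun n hn => ?_⟩
  rcases le_total m n with hmn | hnm
  · exact hup m hm n hmn hn
  · exact (hup n hn m hnm hm).symm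

def AltPolyOnDiagonal (U : ℚ × ℚ → ℝ) (S : Set (ℚ × ℚ)) (k : ℚ) (p : ℝ[X]) : Prop :=
  ∀ s : ℚ, (s, k) ∈ S → ∀ n : ℤ, s + k = n → U (s, k) = (-1 : ℝ) ^ n * p.eval (s : ℝ)

lemma neg_one_zpow_mul_self {α : Type*} [Field α] (n : ℤ) : (-1 : α) ^ n * (-1) ^ n = 1 := by
  rw [← mul_zpow]; norm_num

section DiamondRectangle

variable {a₁ a₂ b₁ b₂ : ℚ} {U : ℚ × ℚ → ℝ}

/-- The harmonic relation on the square with bottom corner `(s, j)`. -/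
theorem DHarmOn.alternating_sub_eq (hU : DHarmOn U (dRect a₁ a₂ b₁ b₂)) {j : ℚ}
    (hj : HalfInt j) (hb₁j : b₁ ≤ j) {p₀ p₁ : ℝ[X]}
    (h₀ : AltPolyOnDiagonal U (dRect a₁ a₂ b₁ b₂) j p₀)
    (h₁ : AltPolyOnDiagonal U (dRect a₁ a₂ b₁ b₂) (j + 1 / 2) p₁) {s : ℚ}
    (hs : (s, j + 1) ∈ dRect a₁ a₂ b₁ b₂) (hs₁ : (s + 1, j + 1) ∈ dRect a₁ a₂ b₁ b₂) {n : ℤ}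
    (hn : s + (j + 1) = n) :
    (-1 : ℝ) ^ (n + 1) * U (s + 1, j + 1) - (-1) ^ n * U (s, j + 1)
      = (taylor 1 p₀ - p₀ - (4 : ℝ) • taylor (1 / 2) p₁).eval (s : ℝ) := by
  obtain ⟨-, has, hsa, -, hjb⟩ := id hs
  obtain ⟨-, -, hs₁a, -, -⟩ := id hs₁
  have m₀ : (s, j) ∈ dRect a₁ a₂ b₁ b₂ :=
    ⟨mem_Zdiamond_iff.2 ⟨hj, n - 1, by push_cast; linarith⟩, has, hsa, hb₁j, by linarith⟩
  have m₀' : (s + 1, j) ∈ dRect a₁ a₂ b₁ b₂ :=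
    ⟨mem_Zdiamond_iff.2 ⟨hj, n, by linarith⟩, by linarith, hs₁a, hb₁j, by linarith⟩
  have m₁ : (s + 1 / 2, j + 1 / 2) ∈ dRect a₁ a₂ b₁ b₂ :=
    ⟨mem_Zdiamond_iff.2 ⟨hj.add halfInt_half, n, by linarith⟩,
      by linarith, by linarith, by linarith, by linarith⟩
  have harm := hU s j m₀ m₀' hs hs₁ m₁
  rw [h₀ s m₀ (n - 1) (by push_cast; linarith), h₀ (s + 1) m₀' n (by linarith),
    h₁ _ m₁ n (by linarith), zpow_sub_one₀ (by norm_num)] at harm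
  rw [zpow_add_one₀ (by norm_num)]
  simp only [eval_sub, eval_smul, taylor_eval, smul_eq_mul]
  push_cast at harm
  linear_combination (-1 : ℝ) ^ n * harm
    - (4 * p₁.eval ((s : ℝ) + 1 / 2) + p₀.eval (s : ℝ) - p₀.eval ((s : ℝ) + 1))
      * neg_one_zpow_mul_self (α := ℝ) n

theorem exists_altPolyOnDiagonal_add_C {k : ℚ} (hk : HalfInt k) {P : ℝ[X]}
    (hstep : ∀ s : ℚ, (s, k) ∈ dRect a₁ a₂ b₁ b₂ → (s + 1, k) ∈ dRect a₁ a₂ b₁ b₂ →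
      ∀ n : ℤ, s + k = n →
        (-1 : ℝ) ^ (n + 1) * U (s + 1, k) - (-1) ^ n * U (s, k) = (taylor 1 P - P).eval (s : ℝ)) :
    ∃ c : ℝ, AltPolyOnDiagonal U (dRect a₁ a₂ b₁ b₂) k (P + C c) := by
  set S : Set ℤ := {n | ((n : ℚ) - k, k) ∈ dRect a₁ a₂ b₁ b₂}
  have hS : S.OrdConnected := by
    refine ⟨fun x hx y hy z hz => ⟨mem_Zdiamond_iff.2 ⟨hk, z, by ring⟩, ?_, ?_, hx.2.2.2⟩⟩
    · have : (x : ℚ) ≤ z := by exact_mod_cast hz.1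
      linarith [hx.2.1]
    · have : (z : ℚ) ≤ y := by exact_mod_cast hz.2
      linarith [hy.2.2.1]
  obtain ⟨c, hc⟩ := hS.exists_forall_eq_of_succ
    (f := fun n => (-1 : ℝ) ^ n * U (n - k, k) - P.eval ((n - k : ℚ) : ℝ)) fun n hn hn₁ => by
      have e : ((n + 1 : ℤ) : ℚ) - k = (n - k) + 1 := by push_cast; ring
      simp only [S, Set.mem_ofPred_eq, e] at hn₁ ⊢
      have := hstep _ hn hn₁ n (by ring)
      simp only [eval_sub, taylor_eval] at this
      push_cast at this ⊢
      linarith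
  refine ⟨c, fun s hs n hn => ?_⟩
  obtain rfl : s = n - k := by linarith
  have := hc n hs
  rw [eval_add, eval_C]
  linear_combination (-1 : ℝ) ^ n * this - U (n - k, k) * neg_one_zpow_mul_self (α := ℝ) n

/-- `m - 1` truncates: the two bottom diagonals carry the zero polynomial. -/
theorem exists_mem_degreeLT_altPolyOnDiagonal (hU : DHarmOn U (dRect a₁ a₂ b₁ b₂))
    (hb₁ : HalfInt b₁)
    (h0 : ∀ s : ℚ, (s, b₁) ∈ dRect a₁ a₂ b₁ b₂ → U (s, b₁) = 0)
    (h0' : ∀ s : ℚ, (s, b₁ + 1/2) ∈ dRect a₁ a₂ b₁ b₂ → U (s, b₁ + 1/2) = 0) (m : ℕ) :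
    ∃ p ∈ degreeLT ℝ (m - 1), AltPolyOnDiagonal U (dRect a₁ a₂ b₁ b₂) (b₁ + m / 2) p := by
  induction m using Nat.twoStepInduction with
  | zero => exact ⟨0, zero_mem _, fun s hs _ _ => by simpa using h0 s (by simpa using hs)⟩
  | one => exact ⟨0, zero_mem _, fun s hs _ _ => by simpa using h0' s (by simpa using hs)⟩
  | more m ih₀ ih₁ =>
    obtain ⟨p₀, hp₀, h₀⟩ := ih₀
    obtain ⟨p₁, hp₁, h₁⟩ := ih₁
    set j := b₁ + m / 2
    have hj : HalfInt j := hb₁.add ⟨m, by simp⟩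
    rw [show b₁ + ((m + 1 : ℕ) : ℚ) / 2 = j + 1 / 2 by push_cast; ring] at h₁
    rw [show b₁ + ((m + 2 : ℕ) : ℚ) / 2 = j + 1 by push_cast; ring]
    have hq : taylor 1 p₀ - p₀ - (4 : ℝ) • taylor (1 / 2) p₁ ∈ degreeLT ℝ m := by
      have hp₀' := degreeLT_mono (Nat.sub_le m 1) hp₀
      rw [Nat.add_sub_cancel] at hp₁
      exact sub_mem (sub_mem (taylor_mem_degreeLT.2 hp₀') hp₀')
        (Submodule.smul_mem _ _ (taylor_mem_degreeLT.2 hp₁))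
    obtain ⟨P, hP, hPq⟩ := exists_mem_degreeLT_taylor_one_sub_eq hq
    obtain ⟨c, hc⟩ := exists_altPolyOnDiagonal_add_C (hj.add (y := 1) ⟨2, by norm_num⟩) (P := P)
      fun s hs hs₁ n hn => by
        rw [hPq]
        exact hU.alternating_sub_eq hj (le_add_of_nonneg_right (by positivity)) h₀ h₁ hs hs₁ hn
    have hC : C c ∈ degreeLT ℝ (m + 1) :=
      mem_degreeLT.2 (degree_C_le.trans_lt (WithBot.coe_lt_coe.2 m.succ_pos))
    exact ⟨P + C c, add_mem hP hC, hc⟩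

end DiamondRectangle

theorem polynomial_structure_on_diagonals_general
    (a₁ a₂ b₁ b₂ : ℚ) (hb₁ : HalfInt b₁)
    (U : ℚ × ℚ → ℝ) (hU : DHarmOn U (dRect a₁ a₂ b₁ b₂))
    (h0 : ∀ s : ℚ, (s, b₁) ∈ dRect a₁ a₂ b₁ b₂ → U (s, b₁) = 0)
    (h0' : ∀ s : ℚ, (s, b₁ + 1/2) ∈ dRect a₁ a₂ b₁ b₂ → U (s, b₁ + 1/2) = 0) :
    ∀ k : ℚ, HalfInt k → b₁ + 1 ≤ k → k ≤ b₂ →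
      ∃ p : Polynomial ℝ, ((p.natDegree : ℚ)) ≤ 2 * (k - b₁) - 2 ∧
        ∀ s : ℚ, (s, k) ∈ dRect a₁ a₂ b₁ b₂ →
          ∀ n : ℤ, s + k = (n : ℚ) → U (s, k) = (-1 : ℝ) ^ n * p.eval ((s : ℝ)) := by
  intro k hk hk₁ _
  obtain ⟨m, rfl⟩ := hb₁.exists_nat_eq_add hk (by linarith)
  obtain ⟨p, hp, hrep⟩ := exists_mem_degreeLT_altPolyOnDiagonal hU hb₁ h0 h0' m
  have hm : 2 ≤ m := by exact_mod_cast (show (2 : ℚ) ≤ m by linarith)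
  have hdeg := natDegree_lt_of_mem_degreeLT (by omega) hp
  refine ⟨p, ?_, hrep⟩
  have : (p.natDegree : ℚ) + 2 ≤ m := by exact_mod_cast (by omega : p.natDegree + 2 ≤ m)
  linarith

/-- Polynomial structure on diagonals: if a discrete harmonic function on a diamond
rectangle vanishes on the two bottom diagonals, then on each diagonal `k` its values
are `(-1)^{s+k} p_k(s)` for a polynomial `p_k` of degree at most `2(k-b₁)-2`. -/
theorem polynomial_structure_on_diagonals
    (a₁ a₂ b₁ b₂ : ℚ) (ha₁ : HalfInt a₁) (ha₂ : HalfInt a₂) (hb₁ : HalfInt b₁)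
    (hb₂ : HalfInt b₂) (hint : ∃ n : ℤ, a₁ + b₁ = (n : ℚ))
    (ha : a₁ ≤ a₂) (hb : b₁ ≤ b₂)
    (U : ℚ × ℚ → ℝ) (hU : DHarmOn U (dRect a₁ a₂ b₁ b₂))
    (h0 : ∀ s : ℚ, (s, b₁) ∈ dRect a₁ a₂ b₁ b₂ → U (s, b₁) = 0)
    (h0' : ∀ s : ℚ, (s, b₁ + 1/2) ∈ dRect a₁ a₂ b₁ b₂ → U (s, b₁ + 1/2) = 0) :
    ∀ k : ℚ, HalfInt k → b₁ + 1 ≤ k → k ≤ b₂ →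
      ∃ p : Polynomial ℝ, ((p.natDegree : ℚ)) ≤ 2 * (k - b₁) - 2 ∧
        ∀ s : ℚ, (s, k) ∈ dRect a₁ a₂ b₁ b₂ →
          ∀ n : ℤ, s + k = (n : ℚ) → U (s, k) = (-1 : ℝ) ^ n * p.eval ((s : ℝ)) :=
  polynomial_structure_on_diagonals_general a₁ a₂ b₁ b₂ hb₁ U hU h0 h0'
end

section
/- (Auxiliary lemma: bound on a long rectangle) There exists a constant C₁ > 1 such that the following holds. Let R = R_{[a₁,a₂],[b₁,b₂]} be a diamond rectangle with a(R) ≥ 10·b(R), let M > 0, and let U be discrete harmonic on R with |U(s,b₁)| ≤ M and |U(s,b₁+1/2)| ≤ M for all applicable s, and with |U| ≤ M on at least half of the points of T_{b₂} = {(s,b₂) ∈ R}. Then |U(s,k)| ≤ M·C₁^{a(R)} for all (s,k) ∈ R. -/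
open Finset Polynomial
open scoped fwdDiff Nat

/-!
Index the rectangle by rows `t ≤ m` at height `b₁ + t/2` and positions `i` within a row, and
twist signs: `gₜ(i) = (-1)^i U(point i of row t)`. The harmonic relation becomes
`Δgₜ + Δgₜ₊₂ = ±4 gₜ₊₁(· + t mod 2)`. From the two bottom rows, induction on `t` bounds `Δᵗgₜ`,
so the Newton coefficients `Δᵏgₜ(0)` with `k ≥ t` are exponentially bounded. The relation
expresses the coefficients of order `k` through those of order `k + 1`, and descending induction
on `k` bounds them all once the low-order coefficients of the top row are bounded. There the
Newton polynomial of degree `< m` stays close to `gₘ`, hence is bounded at the points where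
`|U| ≤ M`, of which there are at least `m` because the rectangle is long. Lagrange interpolation
at `m` such points bounds it on `[0, m)` up to a factor `(2a)^(m-1)/(m-1)! ≤ e^{2a}`, where `a`
is the row length.
-/

section ForwardDifference

variable {f g : ℕ → ℝ}

theorem fwdDiff_iter_congr {n y : ℕ} (h : ∀ j ≤ n, f (y + j) = g (y + j)) :
    Δ_[1] ^[n] f y = Δ_[1] ^[n] g y := by
  simp only [fwdDiff_iter_eq_sum_shift, smul_eq_mul, mul_one]
  exact sum_congr rfl fun j hj => by rw [h j (Nat.lt_succ_iff.mp (mem_range.mp hj))]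

theorem two_pow_eq_sum_choose (n : ℕ) : (2 : ℝ) ^ n = ∑ j ∈ range (n + 1), (n.choose j : ℝ) := by
  exact_mod_cast (Nat.sum_range_choose n).symm

theorem abs_fwdDiff_iter_le {n y : ℕ} {B : ℝ} (h : ∀ j ≤ n, |f (y + j)| ≤ B) :
    |Δ_[1] ^[n] f y| ≤ 2 ^ n * B := by
  rw [fwdDiff_iter_eq_sum_shift, two_pow_eq_sum_choose, sum_mul]
  refine (abs_sum_le_sum_abs _ _).trans (sum_le_sum fun j hj => ?_)
  rw [zsmul_eq_mul, abs_mul, Int.cast_mul, Int.cast_pow, Int.cast_neg, Int.cast_one,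
    Int.cast_natCast, abs_mul, abs_pow, abs_neg, abs_one, one_pow, one_mul, Nat.abs_cast,
    smul_eq_mul, mul_one]
  exact mul_le_mul_of_nonneg_left (h j (Nat.lt_succ_iff.mp (mem_range.mp hj))) (by positivity)

theorem eq_sum_choose_mul_fwdDiff_iter (f : ℕ → ℝ) (x : ℕ) :
    f x = ∑ k ∈ range (x + 1), (x.choose k : ℝ) * Δ_[1] ^[k] f 0 := by
  simpa using shift_eq_sum_fwdDiff_iter 1 f x 0

theorem abs_le_of_abs_fwdDiff_iter_le {x : ℕ} {B : ℝ} (h : ∀ k ≤ x, |Δ_[1] ^[k] f 0| ≤ B) :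
    |f x| ≤ 2 ^ x * B := by
  rw [eq_sum_choose_mul_fwdDiff_iter f x, two_pow_eq_sum_choose, sum_mul]
  refine (abs_sum_le_sum_abs _ _).trans (sum_le_sum fun k hk => ?_)
  rw [abs_mul, Nat.abs_cast]
  exact mul_le_mul_of_nonneg_left (h k (Nat.lt_succ_iff.mp (mem_range.mp hk))) (by positivity)

theorem abs_sub_sum_choose_mul_fwdDiff_iter_le {d x : ℕ} {B : ℝ} (hB : 0 ≤ B)
    (h : ∀ k, d ≤ k → k ≤ x → |Δ_[1] ^[k] f 0| ≤ B) :
    |f x - ∑ k ∈ range d, (x.choose k : ℝ) * Δ_[1] ^[k] f 0| ≤ 2 ^ x * B := by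
  rw [eq_sum_choose_mul_fwdDiff_iter f x]
  rcases le_total d (x + 1) with hd | hd
  · rw [← sum_range_add_sum_Ico _ hd, add_sub_cancel_left, two_pow_eq_sum_choose, sum_mul]
    refine (abs_sum_le_sum_abs _ _).trans ((sum_le_sum fun k hk => ?_).trans
      (sum_le_sum_of_subset_of_nonneg (fun k hk => mem_range.mpr (mem_Ico.mp hk).2) fun _ _ _ => by
        positivity))
    obtain ⟨hdk, hkx⟩ := mem_Ico.mp hk
    rw [abs_mul, Nat.abs_cast]
    exact mul_le_mul_of_nonneg_left (h k hdk (Nat.lt_succ_iff.mp hkx)) (by positivity)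
  · rw [← sum_range_add_sum_Ico _ hd, sub_add_cancel_left, abs_neg,
      sum_eq_zero fun k hk => by rw [Nat.choose_eq_zero_of_lt (mem_Ico.mp hk).1, Nat.cast_zero,
        zero_mul], abs_zero]
    positivity

theorem fwdDiff_iter_apply_one (f : ℕ → ℝ) (k : ℕ) :
    Δ_[1] ^[k] f 1 = Δ_[1] ^[k] f 0 + Δ_[1] ^[k + 1] f 0 := by
  rw [Function.iterate_succ_apply', fwdDiff, zero_add, add_sub_cancel]

end ForwardDifference

section Interpolation

theorem prod_erase_abs_sub_natCast {d i : ℕ} (hi : i < d) :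
    ∏ j ∈ (range d).erase i, |(i : ℝ) - j| = i ! * (d - 1 - i)! := by
  induction d, hi using Nat.le_induction with
  | base =>
    rw [range_add_one, erase_insert notMem_range_self, show i.succ - 1 - i = 0 by omega,
      Nat.factorial_zero, Nat.cast_one, mul_one, ← Nat.descFactorial_self,
      Nat.descFactorial_eq_prod_range, Nat.cast_prod]
    refine prod_congr rfl fun j hj => ?_
    rw [Nat.cast_sub (mem_range.mp hj).le, abs_of_nonneg (sub_nonneg.mpr (by
      exact_mod_cast (mem_range.mp hj).le))]
  | succ d hid ih =>
    rw [range_add_one, erase_insert_of_ne (by omega), prod_insert (by simp), ih,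
      abs_sub_comm, abs_of_nonneg (sub_nonneg.mpr (by exact_mod_cast (by omega : i ≤ d))),
      show d + 1 - 1 - i = (d - 1 - i) + 1 by omega, Nat.factorial_succ]
    push_cast [show i ≤ d - 1 by omega, show 1 ≤ d by omega]
    ring

theorem sum_inv_factorial_mul_factorial (n : ℕ) :
    ∑ i ∈ range (n + 1), ((i ! : ℝ) * (n - i)!)⁻¹ = 2 ^ n / n ! := by
  rw [two_pow_eq_sum_choose, sum_div]
  refine sum_congr rfl fun i hi => ?_
  rw [Nat.cast_choose ℝ (Nat.lt_succ_iff.mp (mem_range.mp hi))]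
  field_simp

variable {n : ℕ} {v : ℕ → ℝ}

theorem natCast_sub_le_sub_of_add_one_le (hv : ∀ i < n, v i + 1 ≤ v (i + 1)) {i j : ℕ}
    (hij : i ≤ j) (hj : j ≤ n) : (j : ℝ) - i ≤ v j - v i := by
  induction j, hij using Nat.le_induction with
  | base => simp
  | succ j hij ih =>
    have := hv j (by omega)
    push_cast
    linarith [ih (by omega)]

theorem abs_natCast_sub_le_abs_sub (hv : ∀ i < n, v i + 1 ≤ v (i + 1)) {i j : ℕ}
    (hi : i ≤ n) (hj : j ≤ n) : |(i : ℝ) - j| ≤ |v i - v j| := by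
  rcases le_total i j with hij | hij
  · rw [abs_sub_comm, abs_sub_comm (v i), abs_of_nonneg (sub_nonneg.mpr (by exact_mod_cast hij))]
    exact (natCast_sub_le_sub_of_add_one_le hv hij hj).trans (le_abs_self _)
  · rw [abs_of_nonneg (sub_nonneg.mpr (by exact_mod_cast hij))]
    exact (natCast_sub_le_sub_of_add_one_le hv hij hi).trans (le_abs_self _)

theorem abs_eval_basis_le (hv : ∀ i < n, v i + 1 ≤ v (i + 1)) {i : ℕ} (hi : i ≤ n) {x L : ℝ}
    (hx : ∀ j ≤ n, |x - v j| ≤ L) :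
    |(Lagrange.basis (range (n + 1)) v i).eval x| ≤ L ^ n / (i ! * (n - i)!) := by
  have hL : 0 ≤ L := (abs_nonneg _).trans (hx i hi)
  rw [Lagrange.basis, eval_prod, abs_prod]
  calc ∏ j ∈ (range (n + 1)).erase i, |(Lagrange.basisDivisor (v i) (v j)).eval x|
      ≤ ∏ j ∈ (range (n + 1)).erase i, L / |(i : ℝ) - j| := by
        refine prod_le_prod (fun _ _ => abs_nonneg _) fun j hj => ?_
        obtain ⟨hji, hj⟩ := mem_erase.mp hj
        have hj : j ≤ n := Nat.lt_succ_iff.mp (mem_range.mp hj)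
        simp only [Lagrange.basisDivisor, eval_mul, eval_C, eval_sub, eval_X, abs_mul, abs_inv]
        rw [inv_mul_eq_div]
        exact div_le_div₀ hL (hx j hj)
          (abs_pos.mpr (sub_ne_zero.mpr (by exact_mod_cast hji.symm)))
          (abs_natCast_sub_le_abs_sub hv hi hj)
    _ = L ^ n / (i ! * (n - i)!) := by
        rw [prod_div_distrib, prod_const, card_erase_of_mem (mem_range.mpr (by omega)),
          card_range, Nat.add_sub_cancel, prod_erase_abs_sub_natCast (by omega),
          Nat.add_sub_cancel]

theorem abs_eval_le_of_abs_eval_nodes_le {p : ℝ[X]} (hp : p.degree ≤ n)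
    (hv : ∀ i < n, v i + 1 ≤ v (i + 1)) {V L x : ℝ} (hV : ∀ i ≤ n, |p.eval (v i)| ≤ V)
    (hx : ∀ i ≤ n, |x - v i| ≤ L) : |p.eval x| ≤ V * (2 * L) ^ n / n ! := by
  have hinj : Set.InjOn v (range (n + 1)) := fun i hi j hj hij => by
    have := abs_natCast_sub_le_abs_sub hv (Nat.lt_succ_iff.mp (mem_range.mp hi))
      (Nat.lt_succ_iff.mp (mem_range.mp hj))
    rw [hij, sub_self, abs_zero, abs_nonpos_iff, sub_eq_zero] at this
    exact_mod_cast this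
  have hdeg : p.degree < #(range (n + 1)) := by
    rw [card_range]
    exact hp.trans_lt (by exact_mod_cast n.lt_succ_self)
  have hV₀ : 0 ≤ V := (abs_nonneg _).trans (hV 0 n.zero_le)
  rw [Lagrange.eq_interpolate hinj hdeg, Lagrange.interpolate_apply, eval_finsetSum]
  calc |∑ i ∈ range (n + 1), (C (p.eval (v i)) * Lagrange.basis (range (n + 1)) v i).eval x|
      ≤ ∑ i ∈ range (n + 1), V * (L ^ n / (i ! * (n - i)!)) := by
        refine (abs_sum_le_sum_abs _ _).trans (sum_le_sum fun i hi => ?_)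
        have hi : i ≤ n := Nat.lt_succ_iff.mp (mem_range.mp hi)
        rw [eval_mul, eval_C, abs_mul]
        exact mul_le_mul (hV i hi) (abs_eval_basis_le hv hi hx) (abs_nonneg _) hV₀
    _ = V * (2 * L) ^ n / n ! := by
        simp_rw [div_eq_mul_inv (L ^ n), ← mul_sum, sum_inv_factorial_mul_factorial, mul_pow]
        ring

theorem exists_degree_le_eval_eq_sum_choose (n : ℕ) (a : ℕ → ℝ) :
    ∃ p : ℝ[X], p.degree ≤ n ∧
      ∀ x : ℕ, p.eval (x : ℝ) = ∑ k ∈ range (n + 1), (x.choose k : ℝ) * a k := by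
  refine ⟨∑ k ∈ range (n + 1), C (a k / k !) * descPochhammer ℝ k, ?_, fun x => ?_⟩
  · refine (degree_sum_le _ _).trans (Finset.sup_le fun k hk => ?_)
    refine degree_le_of_natDegree_le ((natDegree_C_mul_le _ _).trans ?_)
    rw [descPochhammer_natDegree]
    exact Nat.lt_succ_iff.mp (mem_range.mp hk)
  · rw [eval_finsetSum]
    refine sum_congr rfl fun k _ => ?_
    rw [eval_mul, eval_C, descPochhammer_eval_eq_descFactorial,
      Nat.descFactorial_eq_factorial_mul_choose, Nat.cast_mul]
    field_simp

theorem abs_le_of_abs_le_on_nodes {f : ℕ → ℝ} {n R : ℕ} {S : Finset ℕ} {V B : ℝ} (hB : 0 ≤ B)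
    (hS : S ⊆ range R) (hSn : n < #S) (hfS : ∀ i ∈ S, |f i| ≤ V)
    (hf : ∀ k, n < k → k < R → |Δ_[1] ^[k] f 0| ≤ B) {x : ℕ} (hx : x ≤ n) :
    |f x| ≤ (V + 2 ^ R * B) * (2 * R) ^ n / n ! := by
  obtain ⟨p, hp, hpf⟩ := exists_degree_le_eval_eq_sum_choose n (fun k => Δ_[1] ^[k] f 0)
  have hSR : #S ≤ R := card_range R ▸ card_le_card hS
  have hfin : (Set.ofPred (· ∈ S)).Finite := S.finite_toSet
  have hcard : #hfin.toFinset = #S := by rw [S.finite_toSet_toFinset]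
  have hnode : ∀ i ≤ n, Nat.nth (· ∈ S) i < R := fun i hi =>
    mem_range.mp (hS (Nat.nth_mem_of_lt_card hfin (by omega)))
  have hfx : f x = p.eval (x : ℝ) := by
    rw [hpf, eq_sum_choose_mul_fwdDiff_iter f x]
    refine sum_subset (range_subset_range.mpr (by omega)) fun k hk hkx => ?_
    rw [Nat.choose_eq_zero_of_lt (by simpa using hkx), Nat.cast_zero, zero_mul]
  rw [hfx]
  refine abs_eval_le_of_abs_eval_nodes_le hp (v := fun i => (Nat.nth (· ∈ S) i : ℝ))
    (fun i hi => ?_) (fun i hi => ?_) (fun i hi => ?_)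
  · exact_mod_cast Nat.nth_lt_nth_of_lt_card hfin i.lt_succ_self (by omega)
  · set y := Nat.nth (· ∈ S) i
    have hfp : |f y - p.eval (y : ℝ)| ≤ 2 ^ R * B := by
      rw [hpf]
      exact (abs_sub_sum_choose_mul_fwdDiff_iter_le hB fun k hk hky =>
        hf k hk (hky.trans_lt (hnode i hi))).trans
        (mul_le_mul_of_nonneg_right (pow_le_pow_right₀ one_le_two (hnode i hi).le) hB)
    calc |p.eval (y : ℝ)| = |f y - (f y - p.eval (y : ℝ))| := by rw [sub_sub_cancel]
      _ ≤ |f y| + |f y - p.eval (y : ℝ)| := abs_sub _ _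
      _ ≤ V + 2 ^ R * B :=
          add_le_add (hfS y (Nat.nth_mem_of_lt_card hfin (by omega))) hfp
  · exact abs_sub_le_of_nonneg_of_le (Nat.cast_nonneg _) (by exact_mod_cast (by omega : x ≤ R))
      (Nat.cast_nonneg _) (by exact_mod_cast (hnode i hi).le)

end Interpolation

theorem abs_le_three_mul_of_add_eq_mul {x y z w e δ B : ℝ} (hδ : |δ| ≤ 1) (he : |e| = 4)
    (h : y + z = e * (x + δ * w)) (hy : |y| ≤ B) (hz : |z| ≤ B) (hw : |w| ≤ B) :
    |x| ≤ 3 * B := by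
  have hsum : 4 * |x + δ * w| ≤ 2 * B := by
    rw [← he, ← abs_mul, ← h]
    linarith [abs_add_le y z]
  have hδw : |δ * w| ≤ B := by
    rw [abs_mul]
    exact (mul_le_of_le_one_left (abs_nonneg w) hδ).trans hw
  calc |x| = |(x + δ * w) - δ * w| := by rw [add_sub_cancel_right]
    _ ≤ |x + δ * w| + |δ * w| := abs_sub _ _
    _ ≤ 3 * B := by linarith [abs_nonneg w]

theorem abs_le_three_pow_mul_of_rec {m : ℕ} {c : ℕ → ℕ → ℝ} {e : ℕ → ℝ} {T : ℝ}
    (hrec : ∀ t k, t + 2 ≤ m → k < m →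
      c t (k + 1) + c (t + 2) (k + 1) = e t * (c (t + 1) k + (t % 2 : ℕ) * c (t + 1) (k + 1)))
    (he : ∀ t, |e t| = 4) (hhigh : ∀ t k, t ≤ k → k ≤ m → |c t k| ≤ T)
    (htop : ∀ k < m, |c m k| ≤ T) (h₁ : 1 ≤ m → |c 1 0| ≤ T) {t k : ℕ} (ht : t ≤ m)
    (hk : k ≤ m) : |c t k| ≤ 3 ^ (m - k) * T := by
  have hT : 0 ≤ T := (abs_nonneg _).trans (hhigh m m le_rfl le_rfl)
  suffices key : ∀ j t k, t ≤ m → k + j = m → |c t k| ≤ 3 ^ j * T from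
    key (m - k) t k ht (by omega)
  intro j
  induction j with
  | zero => exact fun t k ht hkm => by simpa using hhigh t k (by omega) (by omega)
  | succ j ih =>
    intro t k ht hkm
    have h3 : T ≤ 3 ^ (j + 1) * T := le_mul_of_one_le_left hT (one_le_pow₀ (by norm_num))
    by_cases htk : t ≤ k
    · exact (hhigh t k htk (by omega)).trans h3
    by_cases htm : t = m
    · exact htm ▸ (htop k (by omega)).trans h3
    obtain ⟨s, rfl⟩ : ∃ s, t = s + 1 := ⟨t - 1, by omega⟩
    rcases Nat.eq_zero_or_pos s with rfl | hs
    · obtain rfl : k = 0 := by omega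
      exact (h₁ (by omega)).trans h3
    have hδ : |((s % 2 : ℕ) : ℝ)| ≤ 1 := by
      rw [Nat.abs_cast]
      exact_mod_cast Nat.lt_succ_iff.mp (Nat.mod_lt s two_pos)
    rw [pow_succ, mul_comm _ 3, mul_assoc]
    exact abs_le_three_mul_of_add_eq_mul hδ (he s) (hrec s k (by omega) (by omega))
      (ih s (k + 1) (by omega) (by omega)) (ih (s + 2) (k + 1) (by omega) (by omega))
      (ih (s + 1) (k + 1) (by omega) (by omega))

theorem exp_natCast_le_four_pow (n : ℕ) : Real.exp n ≤ 4 ^ n := by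
  rw [← mul_one (n : ℝ), Real.exp_nat_mul]
  exact pow_le_pow_left₀ (Real.exp_pos 1).le (Real.exp_one_lt_d9.le.trans (by norm_num)) n

/-- Row `t` of the diamond rectangle `dRect a₁ (a₁ + A/2) b₁ (b₁ + m/2)` consists of the
`rowLength A t` points `rowPoint a₁ b₁ t i = (a₁ + (t mod 2)/2 + i, b₁ + t/2)`. -/
def rowLength (A t : ℕ) : ℕ := (A + 2 - t % 2) / 2

theorem rowLength_add_two (A t : ℕ) : rowLength A (t + 2) = rowLength A t := by
  simp [rowLength]

/-- The centre of the square with corners `(t, i)` and `(t + 2, i + 1)` is the point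
`i + t mod 2` of row `t + 1`. -/
def IsHarmonicRows (A m : ℕ) (f : ℕ → ℕ → ℝ) : Prop :=
  ∀ t i, t + 2 ≤ m → i + 1 < rowLength A t →
    f t i + f t (i + 1) + f (t + 2) i + f (t + 2) (i + 1) = 4 * f (t + 1) (i + t % 2)

def IsTwistedHarmonicRows (A m : ℕ) (e : ℕ → ℝ) (g : ℕ → ℕ → ℝ) : Prop :=
  ∀ t i, t + 2 ≤ m → i + 1 < rowLength A t →
    Δ_[1] (g t) i + Δ_[1] (g (t + 2)) i = e t * g (t + 1) (i + t % 2)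

section TwistedRows

variable {A m : ℕ} {e : ℕ → ℝ} {g : ℕ → ℕ → ℝ} {M : ℝ}

theorem IsTwistedHarmonicRows.fwdDiff_iter (hg : IsTwistedHarmonicRows A m e g) {t k i : ℕ}
    (ht : t + 2 ≤ m) (hi : i + k + 1 < rowLength A t) :
    Δ_[1] ^[k + 1] (g t) i + Δ_[1] ^[k + 1] (g (t + 2)) i =
      e t * Δ_[1] ^[k] (g (t + 1)) (i + t % 2) := by
  rw [Function.iterate_succ_apply, Function.iterate_succ_apply, ← Pi.add_apply,
    ← fwdDiff_iter_add, fwdDiff_iter_congr (g := e t • fun j => g (t + 1) (j + t % 2))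
      fun j hj => hg t (i + j) ht (by omega), fwdDiff_iter_const_smul, Pi.smul_apply,
    fwdDiff_iter_comp_add, smul_eq_mul]

theorem IsTwistedHarmonicRows.fwdDiff_iter_zero (hg : IsTwistedHarmonicRows A m e g) {t k : ℕ}
    (ht : t + 2 ≤ m) (hk : k + 1 < rowLength A t) :
    Δ_[1] ^[k + 1] (g t) 0 + Δ_[1] ^[k + 1] (g (t + 2)) 0 =
      e t * (Δ_[1] ^[k] (g (t + 1)) 0 + (t % 2 : ℕ) * Δ_[1] ^[k + 1] (g (t + 1)) 0) := by
  rw [hg.fwdDiff_iter ht (by omega), zero_add]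
  rcases Nat.mod_two_eq_zero_or_one t with h | h <;> simp [h, fwdDiff_iter_apply_one]

theorem IsTwistedHarmonicRows.abs_fwdDiff_iter_self_le (hg : IsTwistedHarmonicRows A m e g)
    (he : ∀ t, |e t| = 4) (hM : 0 ≤ M) (h₀ : ∀ i < rowLength A 0, |g 0 i| ≤ M)
    (h₁ : ∀ i, 1 ≤ m → i < rowLength A 1 → |g 1 i| ≤ M) :
    ∀ t ≤ m, ∀ i, i + t < rowLength A t → |Δ_[1] ^[t] (g t) i| ≤ M * 8 ^ (t + 1) := by
  intro t
  induction t using Nat.twoStepInduction with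
  | zero => exact fun _ i hi => (h₀ i hi).trans (by norm_num; linarith)
  | one =>
    refine fun hm i hi => (abs_fwdDiff_iter_le fun j hj => h₁ (i + j) hm (by omega)).trans ?_
    norm_num
    linarith
  | more t ih₀ ih₁ =>
    intro ht i hi
    rw [rowLength_add_two] at hi
    have hsum := hg.fwdDiff_iter (t := t) (k := t + 1) (i := i) (by omega) (by omega)
    have hmid := ih₁ (by omega) (i + t % 2) (by unfold rowLength at hi ⊢; omega)
    have hlow : |Δ_[1] ^[t + 2] (g t) i| ≤ 2 ^ 2 * (M * 8 ^ (t + 1)) := by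
      rw [add_comm t 2, Function.iterate_add_apply]
      exact abs_fwdDiff_iter_le fun j hj => ih₀ (by omega) (i + j) (by omega)
    calc |Δ_[1] ^[t + 2] (g (t + 2)) i|
        = |e t * Δ_[1] ^[t + 1] (g (t + 1)) (i + t % 2) - Δ_[1] ^[t + 2] (g t) i| := by
          rw [← hsum, add_sub_cancel_left]
      _ ≤ 4 * (M * 8 ^ (t + 1 + 1)) + 2 ^ 2 * (M * 8 ^ (t + 1)) := by
          refine (abs_sub _ _).trans (add_le_add ?_ hlow)
          rw [abs_mul, he]
          exact mul_le_mul_of_nonneg_left hmid (by norm_num)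
      _ ≤ M * 8 ^ (t + 2 + 1) := by
          have : 0 ≤ M * 8 ^ t := by positivity
          ring_nf
          nlinarith

theorem IsTwistedHarmonicRows.abs_fwdDiff_iter_zero_le_of_le (hg : IsTwistedHarmonicRows A m e g)
    (he : ∀ t, |e t| = 4) (hM : 0 ≤ M) (h₀ : ∀ i < rowLength A 0, |g 0 i| ≤ M)
    (h₁ : ∀ i, 1 ≤ m → i < rowLength A 1 → |g 1 i| ≤ M) {t k : ℕ} (ht : t ≤ m) (htk : t ≤ k)
    (hk : k < rowLength A t) : |Δ_[1] ^[k] (g t) 0| ≤ M * 8 ^ (k + 1) := by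
  obtain ⟨j, rfl⟩ := Nat.exists_eq_add_of_le' htk
  rw [Function.iterate_add_apply]
  calc |Δ_[1] ^[j] (Δ_[1] ^[t] (g t)) 0| ≤ 2 ^ j * (M * 8 ^ (t + 1)) :=
        abs_fwdDiff_iter_le fun i hi =>
          hg.abs_fwdDiff_iter_self_le he hM h₀ h₁ t ht (0 + i) (by omega)
    _ ≤ 8 ^ j * (M * 8 ^ (t + 1)) :=
        mul_le_mul_of_nonneg_right (pow_le_pow_left₀ (by norm_num) (by norm_num) j) (by positivity)
    _ = M * 8 ^ (j + t + 1) := by ring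

theorem IsTwistedHarmonicRows.abs_top_row_le (hg : IsTwistedHarmonicRows A m e g)
    (he : ∀ t, |e t| = 4) (hM : 0 ≤ M) (h₀ : ∀ i < rowLength A 0, |g 0 i| ≤ M)
    (h₁ : ∀ i, 1 ≤ m → i < rowLength A 1 → |g 1 i| ≤ M) {S : Finset ℕ}
    (hS : S ⊆ range (rowLength A m)) (hSm : m ≤ #S) (hgS : ∀ i ∈ S, |g m i| ≤ M) {x : ℕ}
    (hx : x < m) : |g m x| ≤ M * 2 ^ (8 * rowLength A m + 1) := by
  set R := rowLength A m
  obtain ⟨n, rfl⟩ : ∃ n, m = n + 1 := ⟨m - 1, by omega⟩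
  refine (abs_le_of_abs_le_on_nodes (B := M * 8 ^ R) (by positivity) hS (by omega) hgS
    (fun k hnk hkR => (hg.abs_fwdDiff_iter_zero_le_of_le he hM h₀ h₁ le_rfl hnk hkR).trans
      (mul_le_mul_of_nonneg_left (pow_le_pow_right₀ (by norm_num) hkR) hM))
    (Nat.lt_succ_iff.mp hx)).trans ?_
  have hfac : (2 * R : ℝ) ^ n / n ! ≤ 2 ^ (4 * R) := by
    refine (Real.pow_div_factorial_le_exp _ (by positivity) n).trans ?_
    rw [pow_mul, show (2 : ℝ) ^ 4 = 4 ^ 2 by norm_num, ← pow_mul]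
    exact_mod_cast exp_natCast_le_four_pow (2 * R)
  have hval : M + 2 ^ R * (M * 8 ^ R) ≤ M * 2 ^ (4 * R + 1) := by
    have : M ≤ M * 2 ^ (4 * R) := le_mul_of_one_le_right hM (one_le_pow₀ one_le_two)
    calc M + 2 ^ R * (M * 8 ^ R) = M + M * 2 ^ (4 * R) := by
          rw [show (8 : ℝ) = 2 ^ 3 by norm_num, ← pow_mul]; ring
      _ ≤ M * 2 ^ (4 * R + 1) := by rw [pow_succ]; linarith
  calc (M + 2 ^ R * (M * 8 ^ R)) * (2 * R) ^ n / n !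
      = (M + 2 ^ R * (M * 8 ^ R)) * ((2 * R) ^ n / n !) := mul_div_assoc _ _ _
    _ ≤ M * 2 ^ (4 * R + 1) * 2 ^ (4 * R) := mul_le_mul hval hfac (by positivity) (by positivity)
    _ = M * 2 ^ (8 * R + 1) := by ring

theorem IsTwistedHarmonicRows.abs_fwdDiff_iter_zero_le (hg : IsTwistedHarmonicRows A m e g)
    (he : ∀ t, |e t| = 4) (hAm : 10 * m + 9 ≤ A) (hM : 0 ≤ M)
    (h₀ : ∀ i < rowLength A 0, |g 0 i| ≤ M) (h₁ : ∀ i, 1 ≤ m → i < rowLength A 1 → |g 1 i| ≤ M)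
    {S : Finset ℕ} (hS : S ⊆ range (rowLength A m)) (hSc : rowLength A m ≤ 2 * #S)
    (hgS : ∀ i ∈ S, |g m i| ≤ M) {t k : ℕ} (ht : t ≤ m) (hk : k < rowLength A t) :
    |Δ_[1] ^[k] (g t) 0| ≤ 3 ^ m * (M * 2 ^ (m + 8 * (A / 2) + 9)) := by
  have hlen : ∀ t, 5 * m + 4 ≤ rowLength A t ∧ rowLength A t ≤ A / 2 + 1 := fun t => by
    unfold rowLength; omega
  set T := M * 2 ^ (m + 8 * (A / 2) + 9)
  have hT : 0 ≤ T := by positivity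
  have hpow : ∀ {a b : ℕ}, a ≤ b → M * 2 ^ a ≤ M * 2 ^ b := fun h =>
    mul_le_mul_of_nonneg_left (pow_le_pow_right₀ one_le_two h) hM
  have hhigh : ∀ t k, t ≤ k → k < rowLength A t → t ≤ m → |Δ_[1] ^[k] (g t) 0| ≤ T := by
    intro t k htk hk ht
    refine (hg.abs_fwdDiff_iter_zero_le_of_le he hM h₀ h₁ ht htk hk).trans ?_
    rw [show (8 : ℝ) = 2 ^ 3 by norm_num, ← pow_mul]
    exact hpow (by have := hlen t; omega)
  have htop : ∀ k < m, |Δ_[1] ^[k] (g m) 0| ≤ T := fun k hk =>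
    calc |Δ_[1] ^[k] (g m) 0| ≤ 2 ^ k * (M * 2 ^ (8 * rowLength A m + 1)) :=
          abs_fwdDiff_iter_le fun x hx =>
            hg.abs_top_row_le he hM h₀ h₁ hS (by have := hlen m; omega) hgS (by omega)
      _ = M * 2 ^ (k + 8 * rowLength A m + 1) := by ring
      _ ≤ T := hpow (by have := hlen m; omega)
  rcases le_or_gt k m with hkm | hkm
  · refine (abs_le_three_pow_mul_of_rec (c := fun t k => Δ_[1] ^[k] (g t) 0)
      (fun t k ht hk => hg.fwdDiff_iter_zero ht (by have := hlen t; omega)) he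
      (fun t k htk hk => hhigh t k htk (by have := hlen t; omega) (by omega)) htop
      (fun hm => (h₁ 0 hm (by have := hlen 1; omega)).trans ?_) ht hkm).trans ?_
    · exact le_mul_of_one_le_right hM (one_le_pow₀ one_le_two)
    · exact mul_le_mul_of_nonneg_right (pow_le_pow_right₀ (by norm_num) (Nat.sub_le m k)) hT
  · exact (hhigh t k (by omega) hk ht).trans (le_mul_of_one_le_left hT (one_le_pow₀ (by norm_num)))

theorem IsTwistedHarmonicRows.abs_le (hg : IsTwistedHarmonicRows A m e g) (he : ∀ t, |e t| = 4)
    (hAm : 10 * m + 9 ≤ A) (hM : 0 ≤ M) (h₀ : ∀ i < rowLength A 0, |g 0 i| ≤ M)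
    (h₁ : ∀ i, 1 ≤ m → i < rowLength A 1 → |g 1 i| ≤ M) {S : Finset ℕ}
    (hS : S ⊆ range (rowLength A m)) (hSc : rowLength A m ≤ 2 * #S)
    (hgS : ∀ i ∈ S, |g m i| ≤ M) {t i : ℕ} (ht : t ≤ m) (hi : i < rowLength A t) :
    |g t i| ≤ M * 2 ^ (5 * A + 5) := by
  have hlen : rowLength A t ≤ A / 2 + 1 := by unfold rowLength; omega
  calc |g t i| ≤ 2 ^ i * (3 ^ m * (M * 2 ^ (m + 8 * (A / 2) + 9))) :=
        abs_le_of_abs_fwdDiff_iter_le fun k hk =>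
          hg.abs_fwdDiff_iter_zero_le he hAm hM h₀ h₁ hS hSc hgS ht (by omega)
    _ ≤ 2 ^ i * (4 ^ m * (M * 2 ^ (m + 8 * (A / 2) + 9))) := by gcongr; norm_num
    _ = M * 2 ^ (i + 2 * m + (m + 8 * (A / 2) + 9)) := by
        rw [show (4 : ℝ) = 2 ^ 2 by norm_num, ← pow_mul]; ring
    _ ≤ M * 2 ^ (5 * A + 5) :=
        mul_le_mul_of_nonneg_left (pow_le_pow_right₀ one_le_two (by omega)) hM

end TwistedRows

theorem IsHarmonicRows.twist {A m : ℕ} {f : ℕ → ℕ → ℝ} (hf : IsHarmonicRows A m f) :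
    IsTwistedHarmonicRows A m (fun t => -4 * (-1) ^ (t % 2)) (fun t i => (-1) ^ i * f t i) := by
  intro t i ht hi
  have hσ : ((-1 : ℝ) ^ (t % 2)) ^ 2 = 1 := by rw [← pow_mul, mul_comm, pow_mul]; simp
  simp only [fwdDiff, pow_add, pow_one]
  linear_combination (-(-1) ^ i) * hf t i ht hi + 4 * (-1) ^ i * f (t + 1) (i + t % 2) * hσ

theorem IsHarmonicRows.abs_le {A m : ℕ} {f : ℕ → ℕ → ℝ} {M : ℝ} (hf : IsHarmonicRows A m f)
    (hAm : 10 * m + 9 ≤ A) (hM : 0 ≤ M) (h₀ : ∀ i < rowLength A 0, |f 0 i| ≤ M)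
    (h₁ : ∀ i, 1 ≤ m → i < rowLength A 1 → |f 1 i| ≤ M) {S : Finset ℕ}
    (hS : S ⊆ range (rowLength A m)) (hSc : rowLength A m ≤ 2 * #S)
    (hfS : ∀ i ∈ S, |f m i| ≤ M) {t i : ℕ} (ht : t ≤ m) (hi : i < rowLength A t) :
    |f t i| ≤ M * 2 ^ (5 * A + 5) := by
  have habs : ∀ t i, |(-1 : ℝ) ^ i * f t i| = |f t i| := by simp [abs_mul]
  simpa [habs] using hf.twist.abs_le (by simp [abs_mul]) hAm hM (by simpa [habs] using h₀)
    (by simpa [habs] using h₁) hS hSc (by simpa [habs] using hfS) ht hi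

theorem HalfInt.exists_nat_eq_add_s10 {a b : ℚ} (ha : HalfInt a) (hb : HalfInt b) (hab : a ≤ b) :
    ∃ n : ℕ, b = a + n / 2 := by
  obtain ⟨za, rfl⟩ := ha
  obtain ⟨zb, rfl⟩ := hb
  have : za ≤ zb := by exact_mod_cast (by linarith : (za : ℚ) ≤ zb)
  refine ⟨(zb - za).toNat, ?_⟩
  have : ((zb - za).toNat : ℚ) = zb - za := by exact_mod_cast Int.toNat_of_nonneg (by omega)
  rw [this]
  ring

def rowPoint (a₁ b₁ : ℚ) (t i : ℕ) : ℚ × ℚ := (a₁ + (t % 2 : ℕ) / 2 + i, b₁ + t / 2)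

section Geometry

variable {a₁ b₁ : ℚ}

theorem rowPoint_mem_Zdiamond (h : (a₁, b₁) ∈ Zdiamond) (t i : ℕ) :
    rowPoint a₁ b₁ t i ∈ Zdiamond := by
  obtain ⟨⟨za, ha⟩, ⟨zb, hb⟩, ⟨n, hn⟩⟩ := h
  dsimp only at ha hb hn
  have key : ((t % 2 : ℕ) : ℚ) + t = 2 * ((t / 2 + t % 2 : ℕ) : ℚ) := by
    exact_mod_cast (by omega : t % 2 + t = 2 * (t / 2 + t % 2))
  refine ⟨⟨za + (t % 2 : ℕ) + 2 * i, ?_⟩, ⟨zb + t, ?_⟩, ⟨n + (t / 2 + t % 2 : ℕ) + i, ?_⟩⟩ <;>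
    simp only [rowPoint, Int.cast_add, Int.cast_mul, Int.cast_natCast, Int.cast_ofNat]
  · rw [ha]; ring
  · rw [hb]; ring
  · linear_combination hn + key / 2

theorem rowPoint_mem_dRect_iff (h : (a₁, b₁) ∈ Zdiamond) {A m t i : ℕ} :
    rowPoint a₁ b₁ t i ∈ dRect a₁ (a₁ + A / 2) b₁ (b₁ + m / 2) ↔ t ≤ m ∧ i < rowLength A t := by
  have hA : i < rowLength A t ↔ ((t % 2 : ℕ) : ℚ) + 2 * i ≤ A := by
    rw [show ((t % 2 : ℕ) : ℚ) + 2 * i = ((t % 2 + 2 * i : ℕ) : ℚ) by push_cast; ring,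
      Nat.cast_le, rowLength]
    omega
  rw [hA, ← Nat.cast_le (α := ℚ)]
  have : (0 : ℚ) ≤ (t % 2 : ℕ) := Nat.cast_nonneg _
  have : (0 : ℚ) ≤ i := Nat.cast_nonneg _
  have : (0 : ℚ) ≤ t := Nat.cast_nonneg _
  constructor
  · rintro ⟨-, -, h₁, -, h₂⟩
    constructor <;> dsimp only [rowPoint] at h₁ h₂ <;> linarith
  · rintro ⟨htm, hi⟩
    refine ⟨rowPoint_mem_Zdiamond h t i, ?_, ?_, ?_, ?_⟩ <;> dsimp only [rowPoint] <;> linarith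

theorem exists_rowPoint_eq (h : (a₁, b₁) ∈ Zdiamond) {p : ℚ × ℚ} (hp : p ∈ Zdiamond)
    (h₁ : a₁ ≤ p.1) (h₂ : b₁ ≤ p.2) : ∃ t i, rowPoint a₁ b₁ t i = p := by
  obtain ⟨⟨za, ha⟩, ⟨zb, hb⟩, ⟨n, hn⟩⟩ := h
  obtain ⟨⟨zs, hs⟩, ⟨zk, hk⟩, ⟨n', hn'⟩⟩ := hp
  dsimp only at ha hb hn
  rw [ha, hb] at hn
  rw [hs, hk] at hn'
  have hab : za + zb = 2 * n := by
    exact_mod_cast (by linear_combination 2 * hn : (za : ℚ) + zb = 2 * n)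
  have hsk : zs + zk = 2 * n' := by
    exact_mod_cast (by linear_combination 2 * hn' : (zs : ℚ) + zk = 2 * n')
  have h₁ : za ≤ zs := by exact_mod_cast (by linarith : (za : ℚ) ≤ zs)
  have h₂ : zb ≤ zk := by exact_mod_cast (by linarith : (zb : ℚ) ≤ zk)
  obtain ⟨t, ht⟩ : ∃ t : ℕ, (t : ℤ) = zk - zb := ⟨(zk - zb).toNat, by omega⟩
  obtain ⟨i, hi⟩ : ∃ i : ℕ, ((t % 2 : ℕ) : ℤ) + 2 * i = zs - za :=
    ⟨((zs - za) / 2).toNat, by omega⟩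
  refine ⟨t, i, Prod.ext ?_ ?_⟩
  · have : (((t % 2 : ℕ) : ℤ) : ℚ) + 2 * ((i : ℤ) : ℚ) = zs - za := by exact_mod_cast hi
    simp only [rowPoint, hs, ha, Int.cast_natCast] at this ⊢
    linear_combination this / 2
  · have : ((t : ℤ) : ℚ) = zk - zb := by exact_mod_cast ht
    simp only [rowPoint, hk, hb, Int.cast_natCast] at this ⊢
    linear_combination this / 2

theorem rowPoint_injective (a₁ b₁ : ℚ) (t : ℕ) : Function.Injective (rowPoint a₁ b₁ t) :=
  fun i j hij => by simpa [rowPoint] using congrArg Prod.fst hij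

theorem DHarmOn.isHarmonicRows (h : (a₁, b₁) ∈ Zdiamond) {A m : ℕ} {U : ℚ × ℚ → ℝ}
    (hU : DHarmOn U (dRect a₁ (a₁ + A / 2) b₁ (b₁ + m / 2))) :
    IsHarmonicRows A m fun t i => U (rowPoint a₁ b₁ t i) := by
  intro t i ht hi
  have mem : ∀ t' i', t' ≤ m → i' < rowLength A t' →
      rowPoint a₁ b₁ t' i' ∈ dRect a₁ (a₁ + A / 2) b₁ (b₁ + m / 2) :=
    fun t' i' ht' hi' => (rowPoint_mem_dRect_iff h).2 ⟨ht', hi'⟩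
  set s := (rowPoint a₁ b₁ t i).1
  set k := (rowPoint a₁ b₁ t i).2
  have hδ : (((t + 1) % 2 : ℕ) : ℚ) / 2 + i + (t % 2 : ℕ) = (t % 2 : ℕ) / 2 + i + 1 / 2 := by
    have : (((t + 1) % 2 + 2 * (t % 2) : ℕ) : ℚ) = ((t % 2 + 1 : ℕ) : ℚ) := by
      congr 1; omega
    simp only [Nat.cast_add, Nat.cast_mul, Nat.cast_ofNat, Nat.cast_one] at this
    linear_combination this / 2
  have e₁ : rowPoint a₁ b₁ t (i + 1) = (s + 1, k) := by
    simp only [rowPoint, s, k, Nat.cast_add, Nat.cast_one]; ring_nf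
  have e₂ : rowPoint a₁ b₁ (t + 2) i = (s, k + 1) := by
    simp only [rowPoint, s, k, Nat.add_mod_right, Nat.cast_add, Nat.cast_ofNat]; ring_nf
  have e₃ : rowPoint a₁ b₁ (t + 2) (i + 1) = (s + 1, k + 1) := by
    simp only [rowPoint, s, k, Nat.add_mod_right, Nat.cast_add, Nat.cast_one, Nat.cast_ofNat]
    ring_nf
  have e₄ : rowPoint a₁ b₁ (t + 1) (i + t % 2) = (s + 1 / 2, k + 1 / 2) := by
    simp only [rowPoint, s, k, Nat.cast_add, Nat.cast_one]
    ext
    · linear_combination hδ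
    · ring
  have := hU s k (mem t i (by omega) (by omega)) (e₁ ▸ mem t (i + 1) (by omega) hi)
    (e₂ ▸ mem (t + 2) i ht (by rw [rowLength_add_two]; omega))
    (e₃ ▸ mem (t + 2) (i + 1) ht (by rw [rowLength_add_two]; omega))
    (e₄ ▸ mem (t + 1) (i + t % 2) (by omega) (by unfold rowLength at hi ⊢; omega))
  simp only [e₁, e₂, e₃, e₄]
  linarith

theorem dRect_top_eq_image (h : (a₁, b₁) ∈ Zdiamond) (A m : ℕ) :
    dRect a₁ (a₁ + A / 2) (b₁ + m / 2) (b₁ + m / 2) =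
      rowPoint a₁ b₁ m '' ↑(range (rowLength A m)) := by
  have hm : b₁ ≤ b₁ + m / 2 := le_add_of_nonneg_right (by positivity)
  ext p
  constructor
  · rintro ⟨hp, h₁, h₂, h₃, h₄⟩
    obtain ⟨t, i, rfl⟩ := exists_rowPoint_eq h hp h₁ (hm.trans h₃)
    obtain rfl : t = m := by
      have : (t : ℚ) = m := by dsimp only [rowPoint] at h₃ h₄; linarith
      exact_mod_cast this
    exact ⟨i, mem_range.mpr ((rowPoint_mem_dRect_iff h).1 ⟨hp, h₁, h₂, hm.trans h₃, h₄⟩).2, rfl⟩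
  · rintro ⟨i, hi, rfl⟩
    obtain ⟨hp, h₁, h₂, -, -⟩ := (rowPoint_mem_dRect_iff h (m := m)).2 ⟨le_rfl, mem_range.mp hi⟩
    exact ⟨hp, h₁, h₂, le_rfl, le_rfl⟩

theorem ncard_dRect_top_inter (h : (a₁, b₁) ∈ Zdiamond) (A m : ℕ) (T : Set (ℚ × ℚ))
    [DecidablePred (· ∈ T)] :
    (dRect a₁ (a₁ + A / 2) (b₁ + m / 2) (b₁ + m / 2) ∩ T).ncard =
      #((range (rowLength A m)).filter fun i => rowPoint a₁ b₁ m i ∈ T) := by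
  rw [dRect_top_eq_image h, ← Set.image_inter_preimage,
    Set.ncard_image_of_injective _ (rowPoint_injective a₁ b₁ m), ← Set.ncard_coe_finset]
  congr 1
  ext i
  simp

theorem ncard_dRect_top (h : (a₁, b₁) ∈ Zdiamond) (A m : ℕ) :
    (dRect a₁ (a₁ + A / 2) (b₁ + m / 2) (b₁ + m / 2)).ncard = rowLength A m := by
  rw [dRect_top_eq_image h, Set.ncard_image_of_injective _ (rowPoint_injective a₁ b₁ m),
    Set.ncard_coe_finset, card_range]

end Geometry

/-- Auxiliary lemma: a discrete harmonic function on a long diamond rectangle that is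
bounded by `M` on the two bottom diagonals and on at least half of the top diagonal is
bounded by `M·C₁^{a(R)}` on the whole rectangle. -/
theorem bound_on_long_rectangle :
    ∃ C₁ : ℝ, 1 < C₁ ∧
      ∀ a₁ a₂ b₁ b₂ : ℚ, HalfInt a₁ → HalfInt a₂ → HalfInt b₁ → HalfInt b₂ →
        (∃ n : ℤ, a₁ + b₁ = (n : ℚ)) → a₁ ≤ a₂ → b₁ ≤ b₂ →
        10 * (b₂ - b₁ + 1/2) ≤ a₂ - a₁ + 1/2 →
        ∀ M : ℝ, 0 < M →
        ∀ U : ℚ × ℚ → ℝ, DHarmOn U (dRect a₁ a₂ b₁ b₂) →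
        (∀ s : ℚ, (s, b₁) ∈ dRect a₁ a₂ b₁ b₂ → |U (s, b₁)| ≤ M) →
        (∀ s : ℚ, (s, b₁ + 1/2) ∈ dRect a₁ a₂ b₁ b₂ → |U (s, b₁ + 1/2)| ≤ M) →
        ((((dRect a₁ a₂ b₂ b₂)).ncard : ℝ) ≤
          2 * ((dRect a₁ a₂ b₂ b₂ ∩ {p | |U p| ≤ M}).ncard : ℝ)) →
        ∀ p ∈ dRect a₁ a₂ b₁ b₂, |U p| ≤ M * C₁ ^ (((a₂ - a₁ + 1/2 : ℚ)) : ℝ) := by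
  refine ⟨2 ^ 10, by norm_num, ?_⟩
  intro a₁ a₂ b₁ b₂ ha₁ ha₂ hb₁ hb₂ hab ha hb hlong M hM U hU hU₀ hU₁ hUtop p hp
  obtain ⟨A, rfl⟩ := ha₁.exists_nat_eq_add_s10 ha₂ ha
  obtain ⟨m, rfl⟩ := hb₁.exists_nat_eq_add_s10 hb₂ hb
  have h : (a₁, b₁) ∈ Zdiamond := ⟨ha₁, hb₁, hab⟩
  have hAm : 10 * m + 9 ≤ A := by
    have : ((10 * m + 10 : ℕ) : ℚ) ≤ ((A + 1 : ℕ) : ℚ) := by push_cast; linarith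
    have := Nat.cast_le.mp this
    omega
  obtain ⟨t, i, rfl⟩ := exists_rowPoint_eq h hp.1 hp.2.1 hp.2.2.2.1
  obtain ⟨ht, hi⟩ := (rowPoint_mem_dRect_iff h).1 hp
  have hrow : ∀ t i, t ≤ m → i < rowLength A t →
      rowPoint a₁ b₁ t i ∈ dRect a₁ (a₁ + A / 2) b₁ (b₁ + m / 2) :=
    fun t i ht hi => (rowPoint_mem_dRect_iff h).2 ⟨ht, hi⟩
  have h₀ : ∀ i < rowLength A 0, |U (rowPoint a₁ b₁ 0 i)| ≤ M := fun i hi => by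
    simpa [rowPoint] using hU₀ _ (by simpa [rowPoint] using hrow 0 i m.zero_le hi)
  have h₁ : ∀ i, 1 ≤ m → i < rowLength A 1 → |U (rowPoint a₁ b₁ 1 i)| ≤ M := fun i hm hi => by
    simpa [rowPoint] using hU₁ _ (by simpa [rowPoint] using hrow 1 i hm hi)
  calc |U (rowPoint a₁ b₁ t i)| ≤ M * 2 ^ (5 * A + 5) :=
        (hU.isHarmonicRows h).abs_le hAm hM.le h₀ h₁ (filter_subset _ _)
          (by rw [ncard_dRect_top h, ncard_dRect_top_inter h] at hUtop; exact_mod_cast hUtop)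
          (fun i hi => (mem_filter.mp hi).2) ht hi
    _ = M * (2 ^ 10) ^ (((a₁ + A / 2 - a₁ + 1 / 2 : ℚ)) : ℝ) := by
        rw [show (((a₁ + A / 2 - a₁ + 1 / 2 : ℚ)) : ℝ) = ((5 * A + 5 : ℕ) : ℝ) / 10 by
            push_cast; ring, ← Real.rpow_natCast (2 : ℝ) 10, ← Real.rpow_mul (by norm_num),
          Nat.cast_ofNat, mul_div_cancel₀ _ (by norm_num), Real.rpow_natCast]
end

section
/- (Discrete Poisson kernel for the square) Let N ≥ 1 be an integer and let n₁ be an integer with |n₁| ≤ N−1. For k = 1, …, 2N−1 let a_k be the unique positive real number with cosh(a_k) = 2 − cos(kπ/(2N)). Define F(n,m) := (1/N) · Σ_{k=1}^{2N−1} sin(πk(n+N)/(2N)) · sin(πk(n₁+N)/(2N)) · sinh(a_k(m+N)) / sinh(2a_kN). Then F is discrete harmonic on Q_N (the mean value equation holds at all (n,m) with |n|, |m| ≤ N−1), F(−N,m) = F(N,m) = 0 for all |m| ≤ N, F(n,−N) = 0 for all |n| ≤ N, F(n₁,N) = 1, and F(n,N) = 0 for every integer n ≠ n₁ with |n| < N.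 -/
/-!
Each summand of the kernel is a separated solution `sin (α (n + N)) * sinh (a (m + N))` of the mean
value equation: the second differences in `n` and in `m` multiply it by `2 cos α` and `2 cosh a`,
which add up to `4` exactly when `cosh a = 2 - cos α`. The sines vanish at `n = ±N` and the
hyperbolic sines at `m = -N`. At `m = N` the hyperbolic factors cancel, and what is left is
`(1/N) Σ_k sin (πkp/(2N)) sin (πkq/(2N)) = δ_{pq}`, the orthogonality of the discrete sine
basis. It follows from the closed form of `Σ_{k<M} cos (πkr/M)`, which telescopes after
multiplication by `2 sin (πr/(2M))`.
-/

open Real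

/-- The discrete Poisson kernel of `Q_N` at the boundary point `(n₁, N)`:
`F(n,m) = (1/N) Σ_{k=1}^{2N-1} sin(πk(n+N)/(2N)) sin(πk(n₁+N)/(2N)) sinh(a_k(m+N))/sinh(2a_kN)`. -/
noncomputable def discretePoissonKernel (N : ℕ) (n₁ : ℤ) (a : ℕ → ℝ) (n m : ℤ) : ℝ :=
  (1 / (N : ℝ)) * ∑ k ∈ Finset.Icc 1 (2 * N - 1),
    Real.sin (Real.pi * (k : ℝ) * ((n : ℝ) + (N : ℝ)) / (2 * (N : ℝ))) *
      Real.sin (Real.pi * (k : ℝ) * ((n₁ : ℝ) + (N : ℝ)) / (2 * (N : ℝ))) *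
      (Real.sinh (a k * ((m : ℝ) + (N : ℝ))) / Real.sinh (2 * a k * (N : ℝ)))

open Finset

lemma two_mul_sin_half_mul_sum_range_cos (θ : ℝ) (M : ℕ) :
    2 * sin (θ / 2) * ∑ k ∈ range M, cos (k * θ) = sin ((M - 1 / 2) * θ) + sin (θ / 2) := by
  induction M with
  | zero => simp [div_eq_inv_mul]
  | succ M ih =>
    have h : θ / 2 - M * θ = -((M - 1 / 2) * θ) := by ring
    rw [sum_range_succ, mul_add, ih, two_mul_sin_mul_cos, h, sin_neg]
    push_cast
    ring_nf

lemma sum_range_cos_pi_mul_div {M : ℕ} (hM : M ≠ 0) {r : ℤ} (hr : ¬ 2 * (M : ℤ) ∣ r) :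
    ∑ k ∈ range M, cos (π * k * r / M) = (1 - cos (r * π)) / 2 := by
  have hM' : (M : ℝ) ≠ 0 := Nat.cast_ne_zero.2 hM
  set θ := π * r / M with hθ
  have hsin : sin (θ / 2) ≠ 0 := by
    rw [Ne, sin_eq_zero_iff]
    rintro ⟨j, hj⟩
    refine hr ⟨j, ?_⟩
    have hrj : (r : ℝ) = 2 * M * j := by
      rw [hθ] at hj
      field_simp at hj
      linear_combination -hj
    exact_mod_cast hrj
  have key := two_mul_sin_half_mul_sum_range_cos θ M
  rw [show ((M : ℝ) - 1 / 2) * θ = r * π - θ / 2 by rw [hθ]; field_simp, sin_sub,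
    sin_int_mul_pi] at key
  have hterm : ∀ k : ℕ, cos (π * k * r / M) = cos (k * θ) := fun k => by rw [hθ]; ring_nf
  simp_rw [hterm]
  apply mul_left_cancel₀ (mul_ne_zero two_ne_zero hsin)
  linear_combination key

theorem sum_sin_mul_sin_pi_div {M : ℕ} {p q : ℤ} (hp : 0 < p) (hpM : p < M) (hq : 0 < q)
    (hqM : q < M) :
    ∑ k ∈ Icc 1 (M - 1), sin (π * k * p / M) * sin (π * k * q / M) =
      if p = q then (M : ℝ) / 2 else 0 := by
  have hM : M ≠ 0 := by omega
  have not_dvd : ∀ r : ℤ, r ≠ 0 → |r| < 2 * M → ¬ 2 * (M : ℤ) ∣ r :=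
    fun r h0 hr hdvd => h0 (Int.eq_zero_of_abs_lt_dvd hdvd hr)
  have hrange : range M = insert 0 (Icc 1 (M - 1)) := by
    ext k; simp only [mem_range, mem_insert, mem_Icc]; omega
  have hprod : ∀ k : ℕ, sin (π * k * p / M) * sin (π * k * q / M) =
      (cos (π * k * (p - q : ℤ) / M) - cos (π * k * (p + q : ℤ) / M)) / 2 := fun k => by
    rw [eq_div_iff two_ne_zero, mul_comm, ← mul_assoc, two_mul_sin_mul_sin]
    push_cast; ring_nf
  calc ∑ k ∈ Icc 1 (M - 1), sin (π * k * p / M) * sin (π * k * q / M)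
      = ∑ k ∈ range M, sin (π * k * p / M) * sin (π * k * q / M) := by
        rw [hrange, sum_insert (by simp)]; simp
    _ = (∑ k ∈ range M, cos (π * k * (p - q : ℤ) / M)
          - ∑ k ∈ range M, cos (π * k * (p + q : ℤ) / M)) / 2 := by
        simp_rw [hprod, ← sum_div, sum_sub_distrib]
    _ = if p = q then (M : ℝ) / 2 else 0 := by
        rw [sum_range_cos_pi_mul_div hM (not_dvd (p + q) (by omega) (by rw [abs_lt]; omega))]
        split_ifs with hpq
        · subst hpq
          rw [show ((p + p : ℤ) : ℝ) * π = p * (2 * π) by push_cast; ring, cos_int_mul_two_pi]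
          simp
        · rw [sum_range_cos_pi_mul_div hM (not_dvd (p - q) (by omega) (by rw [abs_lt]; omega))]
          push_cast
          rw [add_mul, sub_mul, cos_add, cos_sub, sin_int_mul_pi]
          ring

def IsDiscreteHarmonicAt (u : ℤ → ℤ → ℝ) (n m : ℤ) : Prop :=
  4 * u n m = u (n + 1) m + u (n - 1) m + u n (m + 1) + u n (m - 1)

namespace IsDiscreteHarmonicAt

variable {u : ℤ → ℤ → ℝ} {n m : ℤ}

theorem const_mul (h : IsDiscreteHarmonicAt u n m) (c : ℝ) :
    IsDiscreteHarmonicAt (fun n m => c * u n m) n m := by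
  unfold IsDiscreteHarmonicAt at *
  linear_combination c * h

theorem sum {ι : Type*} (s : Finset ι) {u : ι → ℤ → ℤ → ℝ}
    (h : ∀ i ∈ s, IsDiscreteHarmonicAt (u i) n m) :
    IsDiscreteHarmonicAt (fun n m => ∑ i ∈ s, u i n m) n m := by
  unfold IsDiscreteHarmonicAt at *
  simp only [mul_sum, ← sum_add_distrib]
  exact sum_congr rfl h

end IsDiscreteHarmonicAt

theorem isDiscreteHarmonicAt_sin_mul_sinh {α b : ℝ} (h : cosh b = 2 - cos α) (x₀ y₀ : ℝ)
    (n m : ℤ) :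
    IsDiscreteHarmonicAt (fun n m => sin (α * (n + x₀)) * sinh (b * (m + y₀))) n m := by
  have hsin : sin (α * ((n + 1 : ℤ) + x₀)) + sin (α * ((n - 1 : ℤ) + x₀)) =
      2 * sin (α * (n + x₀)) * cos α := by
    push_cast
    rw [show α * (n + 1 + x₀) = α * (n + x₀) + α by ring,
      show α * (n - 1 + x₀) = α * (n + x₀) - α by ring, sin_add, sin_sub]
    ring
  have hsinh : sinh (b * ((m + 1 : ℤ) + y₀)) + sinh (b * ((m - 1 : ℤ) + y₀)) =
      2 * sinh (b * (m + y₀)) * cosh b := by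
    push_cast
    rw [show b * (m + 1 + y₀) = b * (m + y₀) + b by ring,
      show b * (m - 1 + y₀) = b * (m + y₀) - b by ring, sinh_add, sinh_sub]
    ring
  unfold IsDiscreteHarmonicAt
  linear_combination (-sinh (b * (m + y₀))) * hsin - sin (α * (n + x₀)) * hsinh +
    (-2) * sin (α * (n + x₀)) * sinh (b * (m + y₀)) * h

theorem isDiscreteHarmonicAt_discretePoissonKernel {N : ℕ} {n₁ : ℤ} {a : ℕ → ℝ}
    (ha : ∀ k ∈ Icc 1 (2 * N - 1), cosh (a k) = 2 - cos (k * π / (2 * N))) (n m : ℤ) :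
    IsDiscreteHarmonicAt (discretePoissonKernel N n₁ a) n m := by
  refine (IsDiscreteHarmonicAt.sum _ fun k hk => ?_).const_mul (1 / (N : ℝ))
  convert (isDiscreteHarmonicAt_sin_mul_sinh (ha k hk) N N n m).const_mul
    (sin (π * k * (n₁ + N) / (2 * N)) / sinh (2 * a k * N)) using 1
  funext n m
  ring_nf

theorem discretePoissonKernel_neg_left (N : ℕ) (n₁ : ℤ) (a : ℕ → ℝ) (m : ℤ) :
    discretePoissonKernel N n₁ a (-N) m = 0 := by
  simp [discretePoissonKernel]

theorem discretePoissonKernel_right (N : ℕ) (n₁ : ℤ) (a : ℕ → ℝ) (m : ℤ) :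
    discretePoissonKernel N n₁ a N m = 0 := by
  rcases eq_or_ne N 0 with rfl | hN
  · simp [discretePoissonKernel]
  refine mul_eq_zero_of_right _ (sum_eq_zero fun k _ => ?_)
  rw [show π * k * ((N : ℤ) + N) / (2 * N) = k * π by push_cast; field_simp; ring,
    sin_nat_mul_pi]
  simp

theorem discretePoissonKernel_bottom (N : ℕ) (n₁ : ℤ) (a : ℕ → ℝ) (n : ℤ) :
    discretePoissonKernel N n₁ a n (-N) = 0 := by
  simp [discretePoissonKernel]

theorem discretePoissonKernel_top {N : ℕ} {n₁ n : ℤ} {a : ℕ → ℝ}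
    (ha : ∀ k ∈ Icc 1 (2 * N - 1), a k ≠ 0) (hn : |n| < N) (hn₁ : |n₁| < N) :
    discretePoissonKernel N n₁ a n N = if n = n₁ then 1 else 0 := by
  rw [abs_lt] at hn hn₁
  have hN : (N : ℝ) ≠ 0 := by norm_cast; omega
  have hsinh : ∀ k ∈ Icc 1 (2 * N - 1), sinh (a k * ((N : ℤ) + N)) / sinh (2 * a k * N) = 1 :=
    fun k hk => by
      rw [show a k * ((N : ℤ) + N) = 2 * a k * N by push_cast; ring]
      exact div_self (sinh_ne_zero.2 (by simp [ha k hk, hN]))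
  have horth := sum_sin_mul_sin_pi_div (M := 2 * N) (p := n + N) (q := n₁ + N) (by omega)
    (by push_cast; omega) (by omega) (by push_cast; omega)
  push_cast at horth
  have hF : discretePoissonKernel N n₁ a n N = 1 / N * ∑ k ∈ Icc 1 (2 * N - 1),
      sin (π * k * (n + N) / (2 * N)) * sin (π * k * (n₁ + N) / (2 * N)) := by
    unfold discretePoissonKernel
    refine congrArg _ (sum_congr rfl fun k hk => ?_)
    rw [hsinh k hk, mul_one]
  simp only [hF, horth, add_left_inj]
  split_ifs <;> simp [hN]

theorem discrete_poisson_kernel_general (N : ℕ) (n₁ : ℤ) (hn₁ : |n₁| ≤ (N : ℤ) - 1)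
    (a : ℕ → ℝ)
    (ha : ∀ k : ℕ, 1 ≤ k → k ≤ 2 * N - 1 →
      0 < a k ∧ Real.cosh (a k) = 2 - Real.cos ((k : ℝ) * Real.pi / (2 * (N : ℝ)))) :
    (∀ n m : ℤ, |n| ≤ (N : ℤ) - 1 → |m| ≤ (N : ℤ) - 1 →
        4 * discretePoissonKernel N n₁ a n m =
          discretePoissonKernel N n₁ a (n + 1) m + discretePoissonKernel N n₁ a (n - 1) m +
            discretePoissonKernel N n₁ a n (m + 1) + discretePoissonKernel N n₁ a n (m - 1)) ∧
      (∀ m : ℤ, |m| ≤ (N : ℤ) →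
        discretePoissonKernel N n₁ a (-(N : ℤ)) m = 0 ∧ discretePoissonKernel N n₁ a (N : ℤ) m = 0) ∧
      (∀ n : ℤ, |n| ≤ (N : ℤ) → discretePoissonKernel N n₁ a n (-(N : ℤ)) = 0) ∧
      discretePoissonKernel N n₁ a n₁ (N : ℤ) = 1 ∧
      (∀ n : ℤ, |n| < (N : ℤ) → n ≠ n₁ → discretePoissonKernel N n₁ a n (N : ℤ) = 0) := by
  have hak : ∀ k ∈ Icc 1 (2 * N - 1), 0 < a k ∧ cosh (a k) = 2 - cos (k * π / (2 * N)) :=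
    fun k hk => ha k (mem_Icc.1 hk).1 (mem_Icc.1 hk).2
  have ha_ne : ∀ k ∈ Icc 1 (2 * N - 1), a k ≠ 0 := fun k hk => (hak k hk).1.ne'
  have hn₁_lt : |n₁| < N := by linarith
  refine ⟨fun n m _ _ =>
      isDiscreteHarmonicAt_discretePoissonKernel (fun k hk => (hak k hk).2) n m,
    fun m _ =>
      ⟨discretePoissonKernel_neg_left N n₁ a m, discretePoissonKernel_right N n₁ a m⟩,
    fun n _ => discretePoissonKernel_bottom N n₁ a n, ?_, fun n hn hne => ?_⟩
  · simpa using discretePoissonKernel_top ha_ne hn₁_lt hn₁_lt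
  · simpa [hne] using discretePoissonKernel_top ha_ne hn hn₁_lt

/-- The discrete Poisson kernel for the square: it is discrete harmonic in `Q_N`,
vanishes on the three sides `{n = ±N}`, `{m = -N}`, equals `1` at `(n₁, N)` and `0` at
the other points of the top side. Here `a_k` is the unique positive solution of
`cosh a_k = 2 - cos(kπ/(2N))`. -/
theorem discrete_poisson_kernel (N : ℕ) (hN : 1 ≤ N) (n₁ : ℤ) (hn₁ : |n₁| ≤ (N : ℤ) - 1)
    (a : ℕ → ℝ)
    (ha : ∀ k : ℕ, 1 ≤ k → k ≤ 2 * N - 1 →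
      0 < a k ∧ Real.cosh (a k) = 2 - Real.cos ((k : ℝ) * Real.pi / (2 * (N : ℝ)))) :
    (∀ n m : ℤ, |n| ≤ (N : ℤ) - 1 → |m| ≤ (N : ℤ) - 1 →
        4 * discretePoissonKernel N n₁ a n m =
          discretePoissonKernel N n₁ a (n + 1) m + discretePoissonKernel N n₁ a (n - 1) m +
            discretePoissonKernel N n₁ a n (m + 1) + discretePoissonKernel N n₁ a n (m - 1)) ∧
      (∀ m : ℤ, |m| ≤ (N : ℤ) →
        discretePoissonKernel N n₁ a (-(N : ℤ)) m = 0 ∧ discretePoissonKernel N n₁ a (N : ℤ) m = 0) ∧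
      (∀ n : ℤ, |n| ≤ (N : ℤ) → discretePoissonKernel N n₁ a n (-(N : ℤ)) = 0) ∧
      discretePoissonKernel N n₁ a n₁ (N : ℤ) = 1 ∧
      (∀ n : ℤ, |n| < (N : ℤ) → n ≠ n₁ → discretePoissonKernel N n₁ a n (N : ℤ) = 0) :=
  discrete_poisson_kernel_general N n₁ hn₁ a ha
end

section
/- (Analytic extension of the Poisson kernel, boundary row case) There exists a constant C > 0 such that the following holds for every integer N ≥ 1, every integer n₁ with |n₁| ≤ N−1, and every integer m with |m| ≤ N/2. For k = 1, …, 2N−1 let a_k be the unique positive real with cosh(a_k) = 2 − cos(kπ/(2N)). Define the entire function G(z) := (1/N) · Σ_{k=1}^{2N−1} sin(πk(Nz+N)/(2N)) · sin(πk(n₁+N)/(2N)) · sinh(a_k(m+N)) / sinh(2a_kN), where sin and sinh denote the complex sine and hyperbolic sine. Then |G(z)| ≤ C/N for every z ∈ ℂ with |Re z| ≤ 1/2 and |Im z| ≤ 1/16; moreover G(n/N) = F(n,m) for every integer n, where F is the discrete Poisson kernel of Q_N at (n₁, N) given by the same formula with z replaced by n/N. -/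
/-- The entire extension `G(z)` of `n ↦ F(n, m)`, rescaled by `n = Nz`. -/
noncomputable def poissonKernelExt (N : ℕ) (n₁ : ℤ) (m : ℤ) (a : ℕ → ℝ) (z : ℂ) : ℂ :=
  (1 / (N : ℂ)) * ∑ k ∈ Finset.Icc 1 (2 * N - 1),
    Complex.sin ((Real.pi : ℂ) * (k : ℂ) * ((N : ℂ) * z + (N : ℂ)) / (2 * (N : ℂ))) *
      Complex.sin ((Real.pi : ℂ) * (k : ℂ) * ((n₁ : ℂ) + (N : ℂ)) / (2 * (N : ℂ))) *
      (Complex.sinh ((a k : ℂ) * ((m : ℂ) + (N : ℂ))) /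
        Complex.sinh (2 * (a k : ℂ) * (N : ℂ)))

/-!
Each of the `2N - 1` modes is estimated separately. On `|Im z| ≤ 1/16` the first sine is at most
`exp (π k / 32)`, the second at most `1`, and since `m ≤ N / 2` the ratio of hyperbolic sines is at
most `exp (-a_k N / 2)`. Comparing `cosh (θ / 5)` with `2 - cos θ` on `[0, π]` gives
`a_k ≥ k π / (10 N)`, so the `k`-th mode is at most `exp (-3 π k / 160)`, and the geometric series
gives `C = (1 - exp (-3 π / 160))⁻¹`. The interpolation identity is `N · (n / N) = n`.
-/

open Real

lemma Real.cosh_div_five_le_two_sub_cos {θ : ℝ} (h0 : 0 ≤ θ) (hπ : θ ≤ π) :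
    cosh (θ / 5) ≤ 2 - cos θ := by
  have hπ2 : π ^ 2 ≤ 10 := by nlinarith [pi_lt_d2, pi_pos]
  have hθ2 : θ ^ 2 ≤ 10 := by nlinarith
  have hcos := cos_le_one_sub_mul_cos_sq (abs_le.2 ⟨by linarith [pi_pos], hπ⟩)
  have hexp := exp_bound_div_one_sub_of_interval (x := θ ^ 2 / 50) (by positivity) (by linarith)
  have hgeom : 1 / (1 - θ ^ 2 / 50) ≤ 1 + θ ^ 2 / 25 := by
    rw [div_le_iff₀ (by linarith)]; nlinarith [sq_nonneg θ]
  have hquad : θ ^ 2 / 25 ≤ 2 / π ^ 2 * θ ^ 2 := by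
    rw [div_mul_eq_mul_div, le_div_iff₀ (by positivity)]; nlinarith [sq_nonneg θ]
  calc cosh (θ / 5) ≤ exp (θ ^ 2 / 50) := by
        convert cosh_le_exp_half_sq (θ / 5) using 2; ring
    _ ≤ 2 - cos θ := by linarith

lemma Real.div_five_le_of_cosh_eq_two_sub_cos {a θ : ℝ} (ha : 0 ≤ a) (h : cosh a = 2 - cos θ)
    (h0 : 0 ≤ θ) (hπ : θ ≤ π) : θ / 5 ≤ a := by
  have := cosh_le_cosh.1 (h ▸ cosh_div_five_le_two_sub_cos h0 hπ)
  rwa [abs_of_nonneg (by positivity), abs_of_nonneg ha] at this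

lemma Real.sinh_div_sinh_le_exp_sub {x y : ℝ} (hxy : x ≤ y) (hy : 0 < y) :
    sinh x / sinh y ≤ exp (x - y) := by
  have hprod : exp (x - y) * sinh y = (exp x - exp (x - 2 * y)) / 2 := by
    rw [sinh_eq, mul_div_assoc', mul_sub, ← exp_add, ← exp_add]; ring_nf
  have : exp (x - 2 * y) ≤ exp (-x) := exp_le_exp.2 (by linarith)
  rw [div_le_iff₀ (sinh_pos_iff.2 hy), hprod, sinh_eq]
  linarith

lemma Complex.norm_sin_le_exp_abs_im (w : ℂ) : ‖Complex.sin w‖ ≤ Real.exp |w.im| := by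
  have hexp (s : ℂ) (hs : s = w ∨ s = -w) : ‖Complex.exp (s * I)‖ ≤ Real.exp |w.im| := by
    rw [Complex.norm_exp, Real.exp_le_exp]
    rcases hs with rfl | rfl <;> simp [le_abs_self, neg_le_abs]
  calc ‖Complex.sin w‖ = ‖Complex.exp (-w * I) - Complex.exp (w * I)‖ / 2 := by
        simp [Complex.sin]
    _ ≤ (‖Complex.exp (-w * I)‖ + ‖Complex.exp (w * I)‖) / 2 := by gcongr; exact norm_sub_le _ _
    _ ≤ Real.exp |w.im| := by linarith [hexp (-w) (.inr rfl), hexp w (.inl rfl)]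

lemma sum_pow_le_inv_one_sub (s : Finset ℕ) {r : ℝ} (h0 : 0 ≤ r) (h1 : r < 1) :
    ∑ k ∈ s, r ^ k ≤ (1 - r)⁻¹ :=
  tsum_geometric_of_lt_one h0 h1 ▸
    (summable_geometric_of_lt_one h0 h1).sum_le_tsum s fun _ _ ↦ pow_nonneg h0 _

lemma norm_poissonKernelExt_summand_le {N : ℕ} (hN : 1 ≤ N) {n₁ m : ℤ} (hm : 2 * |m| ≤ (N : ℤ))
    {k : ℕ} (hk : k ≤ 2 * N) {a : ℝ} (ha : 0 < a)
    (hcosh : cosh a = 2 - cos ((k : ℝ) * π / (2 * (N : ℝ)))) {z : ℂ} (hz : |z.im| ≤ 1 / 16) :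
    ‖Complex.sin ((π : ℂ) * (k : ℂ) * ((N : ℂ) * z + (N : ℂ)) / (2 * (N : ℂ))) *
      Complex.sin ((π : ℂ) * (k : ℂ) * ((n₁ : ℂ) + (N : ℂ)) / (2 * (N : ℂ))) *
      (Complex.sinh ((a : ℂ) * ((m : ℂ) + (N : ℂ))) / Complex.sinh (2 * (a : ℂ) * (N : ℂ)))‖ ≤
      Real.exp (-(3 * π / 160)) ^ k := by
  have hN0 : (0 : ℝ) < N := by exact_mod_cast hN
  have hm' : 2 * |(m : ℝ)| ≤ N := by exact_mod_cast hm
  obtain ⟨hm_lower, hm_upper⟩ := abs_le.1 (show |(m : ℝ)| ≤ N / 2 by linarith)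
  have hkπ : (k : ℝ) * π / (2 * N) ≤ π := by
    have : (k : ℝ) ≤ 2 * N := by exact_mod_cast hk
    rw [div_le_iff₀ (by positivity)]; nlinarith [pi_pos]
  have ha_lower : (k : ℝ) * π / 10 ≤ a * N := by
    have := div_five_le_of_cosh_eq_two_sub_cos ha.le hcosh (by positivity) hkπ
    rw [div_div, div_le_iff₀ (by positivity)] at this
    nlinarith
  have hNc : (N : ℂ) ≠ 0 := by exact_mod_cast hN0.ne'
  have hsin_z : ‖Complex.sin ((π : ℂ) * k * (N * z + N) / (2 * N))‖ ≤ Real.exp (π * k / 32) := by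
    have harg : (π : ℂ) * k * (N * z + N) / (2 * N) = ((π * k / 2 : ℝ) : ℂ) * (z + 1) := by
      push_cast; field_simp
    refine (Complex.norm_sin_le_exp_abs_im _).trans (exp_le_exp.2 ?_)
    rw [harg, Complex.im_ofReal_mul, Complex.add_im, Complex.one_im, add_zero, abs_mul,
      abs_of_nonneg (by positivity)]
    have := mul_le_mul_of_nonneg_left hz (by positivity : 0 ≤ π * k / 2)
    linarith
  have hsin_n₁ : ‖Complex.sin ((π : ℂ) * k * (n₁ + N) / (2 * N))‖ ≤ 1 := by
    rw [show (π : ℂ) * k * (n₁ + N) / (2 * N) = ((π * k * (n₁ + N) / (2 * N) : ℝ) : ℂ) by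
      push_cast; ring, ← Complex.ofReal_sin, Complex.norm_real, norm_eq_abs]
    exact abs_sin_le_one _
  have hsinh : ‖Complex.sinh (a * (m + N)) / Complex.sinh (2 * a * N)‖ ≤
      Real.exp (a * (m + N) - 2 * a * N) := by
    rw [show (a : ℂ) * (m + N) = ((a * (m + N) : ℝ) : ℂ) by push_cast; ring,
      show 2 * (a : ℂ) * N = ((2 * a * N : ℝ) : ℂ) by push_cast; ring,
      ← Complex.ofReal_sinh, ← Complex.ofReal_sinh, ← Complex.ofReal_div, Complex.norm_real,
      norm_eq_abs, abs_of_nonneg (div_nonneg (sinh_nonneg_iff.2 (by nlinarith))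
        (sinh_nonneg_iff.2 (by positivity)))]
    exact sinh_div_sinh_le_exp_sub (by nlinarith) (by positivity)
  rw [norm_mul, norm_mul, ← exp_nat_mul]
  calc _ ≤ Real.exp (π * k / 32) * 1 * Real.exp (a * (m + N) - 2 * a * N) := by gcongr
    _ ≤ Real.exp (k * -(3 * π / 160)) := by
      rw [mul_one, ← exp_add, exp_le_exp]
      nlinarith

lemma norm_poissonKernelExt_le {N : ℕ} (hN : 1 ≤ N) {n₁ m : ℤ} (hm : 2 * |m| ≤ (N : ℤ))
    {a : ℕ → ℝ} (ha : ∀ k : ℕ, 1 ≤ k → k ≤ 2 * N - 1 →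
      0 < a k ∧ cosh (a k) = 2 - cos ((k : ℝ) * π / (2 * (N : ℝ))))
    {z : ℂ} (hz : |z.im| ≤ 1 / 16) :
    ‖poissonKernelExt N n₁ m a z‖ ≤ (1 - Real.exp (-(3 * π / 160)))⁻¹ / N := by
  rw [poissonKernelExt, norm_mul, norm_div, norm_one, Complex.norm_natCast, one_div_mul_eq_div]
  gcongr
  calc _ ≤ ∑ k ∈ Finset.Icc 1 (2 * N - 1), Real.exp (-(3 * π / 160)) ^ k := by
        refine (norm_sum_le _ _).trans (Finset.sum_le_sum fun k hk ↦ ?_)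
        obtain ⟨hk1, hk2⟩ := Finset.mem_Icc.1 hk
        obtain ⟨ha_pos, ha_cosh⟩ := ha k hk1 hk2
        exact norm_poissonKernelExt_summand_le hN hm (hk2.trans (Nat.sub_le _ _)) ha_pos ha_cosh hz
    _ ≤ _ := sum_pow_le_inv_one_sub _ (exp_nonneg _) (exp_lt_one_iff.2 (by linarith [pi_pos]))

lemma poissonKernelExt_intCast_div {N : ℕ} (hN : N ≠ 0) (n₁ m : ℤ) (a : ℕ → ℝ) (n : ℤ) :
    poissonKernelExt N n₁ m a ((n : ℂ) / (N : ℂ)) = discretePoissonKernel N n₁ a n m := by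
  rw [poissonKernelExt, discretePoissonKernel, mul_div_cancel₀ _ (Nat.cast_ne_zero.2 hN)]
  push_cast
  rfl

/-- Analytic extension of the Poisson kernel: `G` extends `n ↦ F(n,m)` via `G(n/N) = F(n,m)`
and satisfies `|G(z)| ≤ C/N` on the rectangle `{|Re z| ≤ 1/2, |Im z| ≤ 1/16}`. Here `a_k`
is the unique positive solution of `cosh a_k = 2 - cos(kπ/(2N))`. -/
theorem poisson_kernel_analytic_extension :
    ∃ C > (0 : ℝ), ∀ N : ℕ, 1 ≤ N → ∀ n₁ : ℤ, |n₁| ≤ (N : ℤ) - 1 →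
      ∀ m : ℤ, 2 * |m| ≤ (N : ℤ) →
      ∀ a : ℕ → ℝ,
      (∀ k : ℕ, 1 ≤ k → k ≤ 2 * N - 1 →
        0 < a k ∧ Real.cosh (a k) = 2 - Real.cos ((k : ℝ) * Real.pi / (2 * (N : ℝ)))) →
      (∀ z : ℂ, |z.re| ≤ 1/2 → |z.im| ≤ 1/16 →
        ‖poissonKernelExt N n₁ m a z‖ ≤ C / N) ∧
      (∀ n : ℤ, poissonKernelExt N n₁ m a ((n : ℂ) / (N : ℂ)) =
        ((discretePoissonKernel N n₁ a n m : ℝ) : ℂ)) :=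
  ⟨(1 - Real.exp (-(3 * π / 160)))⁻¹,
    inv_pos.2 (sub_pos.2 (exp_lt_one_iff.2 (by linarith [pi_pos]))),
    fun _ hN _ _ _ hm _ ha ↦ ⟨fun _ _ hz ↦ norm_poissonKernelExt_le hN hm ha hz,
      poissonKernelExt_intCast_div (by omega) _ _ _⟩⟩
end
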